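/- arXiv:1405.7354 — 9 statements merged into one kernel-verified Lean document; each statement's English description precedes it below -/
import Mathlib

section
/- Let a and β be real numbers with β > a. Let (ρ_i)_{i∈ι} be a family of complex numbers indexed by a countable set ι such that ρ_i ≠ 2β − a and ρ_i ≠ a for every i, such that both families i ↦ (1 + |Re ρ_i|)/(1 + |ρ_i + a − 2β|)² and i ↦ (1 + |Re ρ_i|)/(1 + |ρ_i − a|)² are summable, and such that there is a bijection σ : ι → ι with ρ_{σ(i)} = 2β − ρ_i for every i (encoding that the multiset is invariant, with multiplicities, under ρ ↦ 2β − ρ). Then for every integer n ≥ 1 the family i ↦ Re[1 − ((ρ_i − a)/(ρ_i + a − 2β))^n] is summable, and the following three conditions are equivalent: (1) Re ρ_i = β for every i; (2) for every integer n ≥ 1, ∑_i Re[1 − ((ρ_i − a)/(ρ_i + a − 2β))^n] ≥ 0; (3) for every ε > 0 there exists a constant c(ε) > 0 such that ∑_i Re[1 − ((ρ_i − a)/(ρ_i + a − 2β))^n] ≥ −c(ε)·e^{εn} for all integers n ≥ 1. -/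
/-!
Write `z i = (ρ i - a) / (ρ i + a - 2β) = 1 + 2(β - a) / (ρ i + a - 2β)`. Then `‖z i‖ ≤ 1` exactly
when `Re ρ i ≤ β`, and the summability hypothesis makes both `Re (z i - 1)` and `‖z i - 1‖²`
summable. The second-order expansion `Re (1 - z ^ n) = -n Re (z - 1) + O(n² ‖z - 1‖² r ^ n)` for
`‖z‖ ≤ r` then makes every Li sum converge.

If `Re ρ i = β` for all `i`, every term of every Li sum is nonnegative. Otherwise the symmetry
`ρ ↦ 2β - ρ` yields some `‖z j‖ > 1`. The moduli `‖z i‖` accumulate only at `1`, so their maximum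
`q > 1` is attained on a finite set `M` and all other moduli are at most some `r < q`. Recurrence
in the compact torus `M → Circle` makes all `(z i / q) ^ n`, `i ∈ M`, close to `1` for infinitely
many `n`; for those `n` the Li sum is at most `-q ^ n / 2 + o(q ^ n)`, which contradicts a lower
bound `-c e ^ (ε n)` as soon as `e ^ ε < q`.
-/

open Filter Topology Asymptotics

theorem norm_pow_sub_one_sub_nsmul_le {R : Type*} [NormedRing R] {z : R} {r : ℝ}
    (hz : ‖z‖ ≤ r) (hr : 1 ≤ r) (n : ℕ) :
    ‖z ^ n - 1 - n • (z - 1)‖ ≤ n ^ 2 * ‖z - 1‖ ^ 2 * r ^ n := by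
  induction n with
  | zero => simp
  | succ n ih =>
    have hrec : z ^ (n + 1) - 1 - (n + 1) • (z - 1)
        = z * (z ^ n - 1 - n • (z - 1)) + n • (z - 1) ^ 2 := by
      rw [pow_succ' z n, sq]
      simp only [add_smul, one_smul, smul_sub, mul_sub, sub_mul, mul_smul_comm, mul_one,
        one_mul]
      abel
    have hsq : ‖n • (z - 1) ^ 2‖ ≤ n * ‖z - 1‖ ^ 2 :=
      norm_nsmul_le.trans (by gcongr; exact norm_pow_le' _ two_pos)
    have hprod : ‖z * (z ^ n - 1 - n • (z - 1))‖ ≤ n ^ 2 * ‖z - 1‖ ^ 2 * r ^ (n + 1) :=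
      calc _ ≤ ‖z‖ * ‖z ^ n - 1 - n • (z - 1)‖ := norm_mul_le _ _
        _ ≤ r * (n ^ 2 * ‖z - 1‖ ^ 2 * r ^ n) := mul_le_mul hz ih (norm_nonneg _) (by linarith)
        _ = n ^ 2 * ‖z - 1‖ ^ 2 * r ^ (n + 1) := by ring
    have hlin : (n : ℝ) * ‖z - 1‖ ^ 2 ≤ n * ‖z - 1‖ ^ 2 * r ^ (n + 1) :=
      le_mul_of_one_le_right (by positivity) (one_le_pow₀ hr)
    rw [hrec]
    refine (norm_add_le _ _).trans ?_
    push_cast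
    nlinarith [mul_nonneg (Nat.cast_nonneg n) (sq_nonneg ‖z - 1‖), one_le_pow₀ (n := n + 1) hr]

theorem abs_re_one_sub_pow_le {z : ℂ} {r : ℝ} (hz : ‖z‖ ≤ r) (hr : 1 ≤ r) (n : ℕ) :
    |(1 - z ^ n).re| ≤ n * |(z - 1).re| + n ^ 2 * ‖z - 1‖ ^ 2 * r ^ n := by
  have hsplit : (1 - z ^ n).re = -(z ^ n - 1 - n • (z - 1)).re - n * (z - 1).re := by
    simp [nsmul_eq_mul]
  have hsecond : |(z ^ n - 1 - n • (z - 1)).re| ≤ n ^ 2 * ‖z - 1‖ ^ 2 * r ^ n :=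
    (Complex.abs_re_le_norm _).trans (norm_pow_sub_one_sub_nsmul_le hz hr n)
  rw [hsplit]
  calc _ ≤ |-(z ^ n - 1 - n • (z - 1)).re| + |n * (z - 1).re| := abs_sub _ _
    _ ≤ _ := by rw [abs_neg, abs_mul, Nat.abs_cast]; linarith

theorem re_one_sub_pow_nonneg {z : ℂ} (hz : ‖z‖ ≤ 1) (n : ℕ) : 0 ≤ (1 - z ^ n).re := by
  have : (z ^ n).re ≤ 1 :=
    (Complex.re_le_norm _).trans (by rw [norm_pow]; exact pow_le_one₀ (norm_nonneg _) hz)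
  simp only [Complex.sub_re, Complex.one_re]
  linarith

theorem frequently_pow_mem_of_mem_nhds_one {G : Type*} [Group G] [TopologicalSpace G]
    [IsTopologicalGroup G] [CompactSpace G] (g : G) {U : Set G} (hU : U ∈ 𝓝 1) :
    ∃ᶠ n in atTop, g ^ n ∈ U := by
  obtain ⟨V, hV, hVU⟩ := exists_nhds_split_inv hU
  obtain ⟨x, -, hx⟩ := isCompact_univ.exists_mapClusterPt (f := atTop)
    (u := fun n : ℕ => g ^ n) (by simp)
  have hW : {y | y * x⁻¹ ∈ V} ∈ 𝓝 x := by
    rw [← nhds_translation_mul_inv]; exact preimage_mem_comap hV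
  have hfreq := frequently_atTop.1 (hx.frequently hW)
  refine frequently_atTop.2 fun N => ?_
  obtain ⟨m, -, hm⟩ := hfreq 0
  obtain ⟨n, hn, hn'⟩ := hfreq (m + N)
  refine ⟨n - m, by omega, ?_⟩
  -- two returns close to the same cluster point `x` differ by a power of `g` close to `1`
  convert hVU _ hn' _ hm using 1
  rw [pow_sub g (by omega : m ≤ n), mul_div_mul_right_eq_div, div_eq_mul_inv]

theorem frequently_forall_norm_pow_sub_one_lt {ι : Type*} (s : Finset ι) {u : ι → ℂ}
    (hu : ∀ i ∈ s, ‖u i‖ = 1) {δ : ℝ} (hδ : 0 < δ) :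
    ∃ᶠ n in atTop, ∀ i ∈ s, ‖u i ^ n - 1‖ < δ := by
  let g : s → Circle := fun i => ⟨u i, mem_sphere_zero_iff_norm.2 (hu i i.2)⟩
  have hU : {v : s → Circle | ∀ i, ‖(v i : ℂ) - 1‖ < δ} ∈ 𝓝 1 := by
    refine IsOpen.mem_nhds ?_ (by simpa using fun _ _ => hδ)
    simp only [Set.ofPred_forall]
    exact isOpen_iInter_of_finite fun i => isOpen_lt (by fun_prop) continuous_const
  exact (frequently_pow_mem_of_mem_nhds_one g hU).mono fun n hn i hi => hn ⟨i, hi⟩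

theorem exists_finset_max_and_gap {ι : Type*} {x : ι → ℝ}
    (hfin : ∀ t > 1, {i | t ≤ x i}.Finite) {j : ι} (hj : 1 < x j) :
    ∃ (q r : ℝ) (M : Finset ι), 1 ≤ r ∧ r < q ∧ M.Nonempty ∧ (∀ i ∈ M, x i = q) ∧
      ∀ i ∉ M, x i ≤ r := by
  classical
  obtain ⟨k, hk, hkmax⟩ := (hfin _ hj).toFinset.exists_max_image x ⟨j, by simp⟩
  have hle : ∀ i, x i ≤ x k := fun i => by
    by_cases hi : x j ≤ x i
    · exact hkmax i (by simpa using hi)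
    · simp only [Set.Finite.mem_toFinset, Set.mem_ofPred_eq] at hk
      linarith
  have hq : 1 < x k := hj.trans_le (hle j)
  obtain ⟨t, ht1, htq⟩ := exists_between hq
  let M := (hfin (x k) hq).toFinset
  let G := (hfin t ht1).toFinset
  have hmem : ∀ i, i ∈ M ↔ x i = x k := fun i => by
    simp only [M, Set.Finite.mem_toFinset, Set.mem_ofPred_eq]
    exact ⟨fun h => le_antisymm (hle i) h, fun h => h.ge⟩
  let r := (insert t ((G \ M).image x)).max' (Finset.insert_nonempty _ _)
  refine ⟨x k, r, M, ?_, ?_, ⟨k, (hmem k).2 rfl⟩, fun i hi => (hmem i).1 hi, fun i hi => ?_⟩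
  · exact ht1.le.trans (Finset.le_max' _ _ (Finset.mem_insert_self _ _))
  · refine (Finset.max'_lt_iff _ _).2 fun y hy => ?_
    rcases Finset.mem_insert.1 hy with rfl | hy
    · exact htq
    · obtain ⟨i, hi, rfl⟩ := Finset.mem_image.1 hy
      exact (hle i).lt_of_ne fun h => (Finset.mem_sdiff.1 hi).2 ((hmem i).2 h)
  · by_cases hiG : i ∈ G
    · exact Finset.le_max' _ _ (Finset.mem_insert_of_mem
        (Finset.mem_image_of_mem x (Finset.mem_sdiff.2 ⟨hiG, hi⟩)))
    · have : x i < t := by simpa [G] using hiG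
      exact this.le.trans (Finset.le_max' _ _ (Finset.mem_insert_self _ _))

theorem eventually_poly_mul_pow_lt_half_pow {q r s : ℝ} (hq : 1 < q) (hr : 0 ≤ r) (hrq : r < q)
    (hs : 0 ≤ s) (hsq : s < q) (K A B C : ℝ) :
    ∀ᶠ n : ℕ in atTop, K + n * A + n ^ 2 * r ^ n * B + C * s ^ n < q ^ n / 2 := by
  have hlo : ∀ (k : ℕ) {t : ℝ}, 0 ≤ t → t < q →
      (fun n : ℕ => (n : ℝ) ^ k * t ^ n) =o[atTop] fun n => q ^ n := fun k t ht htq =>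
    isLittleO_pow_const_mul_const_pow_const_pow_of_norm_lt k (by rwa [Real.norm_of_nonneg ht])
  have ho := ((((hlo 0 zero_le_one hq).const_mul_left K).add
    ((hlo 1 zero_le_one hq).const_mul_left A)).add
    ((hlo 2 hr hrq).const_mul_left B)).add ((hlo 0 hs hsq).const_mul_left C)
  filter_upwards [ho.def (by norm_num : (0 : ℝ) < 1 / 4)] with n hn
  have hqn := pow_pos (zero_lt_one.trans hq) n
  simp only [pow_zero, one_pow, pow_one, mul_one, one_mul, Real.norm_eq_abs, abs_of_pos hqn] at hn
  linarith [le_abs_self (K + A * n + B * (n ^ 2 * r ^ n) + C * s ^ n)]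

section LiSums

variable {ι : Type*} {z : ι → ℂ}

theorem finite_setOf_le_norm (hsq : Summable fun i => ‖z i - 1‖ ^ 2) {t : ℝ} (ht : 1 < t) :
    {i | t ≤ ‖z i‖}.Finite := by
  have hev := hsq.tendsto_cofinite_zero.eventually_lt_const (by positivity : (0 : ℝ) < (t - 1) ^ 2)
  refine (eventually_cofinite.1 hev).subset fun i hi => ?_
  simp only [Set.mem_ofPred_eq, not_lt] at hi ⊢
  have : t - 1 ≤ ‖z i - 1‖ := by
    have := norm_sub_norm_le (z i) 1
    rw [norm_one] at this
    linarith
  exact pow_le_pow_left₀ (by linarith) this 2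

variable (hre : Summable fun i => (z i - 1).re) (hsq : Summable fun i => ‖z i - 1‖ ^ 2)
include hre hsq

theorem summable_re_one_sub_pow (n : ℕ) : Summable fun i => (1 - z i ^ n).re := by
  refine Summable.of_norm_bounded_eventually
    ((hre.abs.mul_left (n : ℝ)).add (hsq.mul_left ((n : ℝ) ^ 2 * 2 ^ n))) ?_
  filter_upwards [(finite_setOf_le_norm hsq one_lt_two).compl_mem_cofinite] with i hi
  have := abs_re_one_sub_pow_le (not_le.1 (show ¬2 ≤ ‖z i‖ from hi)).le one_le_two n
  rw [Real.norm_eq_abs]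
  linarith

theorem tsum_re_one_sub_pow_le (M : Finset ι) {r : ℝ} (hr : 1 ≤ r) (hM : ∀ i ∉ M, ‖z i‖ ≤ r)
    (n : ℕ) :
    ∑' i, (1 - z i ^ n).re ≤ ∑ i ∈ M, (1 - z i ^ n).re +
      (n * ∑' i, |(z i - 1).re| + n ^ 2 * r ^ n * ∑' i, ‖z i - 1‖ ^ 2) := by
  set f := fun i => (1 - z i ^ n).re
  have hind : Summable ((M : Set ι).indicator f) :=
    summable_of_ne_finset_zero fun i hi => Set.indicator_of_notMem (by simpa using hi) _
  have hbound : Summable fun i => n * |(z i - 1).re| + n ^ 2 * r ^ n * ‖z i - 1‖ ^ 2 :=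
    (hre.abs.mul_left _).add (hsq.mul_left _)
  calc ∑' i, f i
      ≤ ∑' i, ((M : Set ι).indicator f i +
          (n * |(z i - 1).re| + n ^ 2 * r ^ n * ‖z i - 1‖ ^ 2)) := by
        refine Summable.tsum_le_tsum (fun i => ?_) (summable_re_one_sub_pow hre hsq n)
          (hind.add hbound)
        by_cases hi : i ∈ M
        · rw [Set.indicator_of_mem (by simpa using hi)]
          have := pow_nonneg (zero_le_one.trans hr) n
          exact le_add_of_nonneg_right (by positivity)
        · rw [Set.indicator_of_notMem (by simpa using hi), zero_add]
          have := abs_re_one_sub_pow_le (hM i hi) hr n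
          exact (le_abs_self _).trans (by linarith)
    _ = _ := by
        rw [hind.tsum_add hbound, ← sum_eq_tsum_indicator, (hre.abs.mul_left _).tsum_add
          (hsq.mul_left _), tsum_mul_left, tsum_mul_left]

theorem exists_frequently_tsum_re_one_sub_pow_lt {j : ι} (hj : 1 < ‖z j‖) :
    ∃ ε > 0, ∀ C : ℝ, ∃ᶠ n : ℕ in atTop, ∑' i, (1 - z i ^ n).re < -C * Real.exp (ε * n) := by
  obtain ⟨q, r, M, hr, hrq, hMne, hMq, hMr⟩ :=
    exists_finset_max_and_gap (fun t ht => finite_setOf_le_norm hsq ht) hj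
  have hq : 1 < q := hr.trans_lt hrq
  have hq0 : 0 < q := zero_lt_one.trans hq
  obtain ⟨s, hs1, hs⟩ := exists_between hq
  refine ⟨Real.log s, Real.log_pos hs1, fun C => ?_⟩
  have hret : ∃ᶠ n : ℕ in atTop, ∀ i ∈ M, ‖(z i / q) ^ n - 1‖ < 1 / 2 :=
    frequently_forall_norm_pow_sub_one_lt M
      (fun i hi => by rw [norm_div, hMq i hi, Complex.norm_real, Real.norm_of_nonneg hq0.le,
        div_self hq0.ne']) one_half_pos
  have hsmall := eventually_poly_mul_pow_lt_half_pow hq (by linarith) hrq (by linarith) hs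
    M.card (∑' i, |(z i - 1).re|) (∑' i, ‖z i - 1‖ ^ 2) C
  refine (hret.and_eventually hsmall).mono fun n ⟨hn, hlt⟩ => ?_
  have hqn : 0 < q ^ n := pow_pos hq0 n
  have hterm : ∀ i ∈ M, (1 - z i ^ n).re ≤ 1 - q ^ n / 2 := fun i hi => by
    have hnear := (Complex.abs_re_le_norm _).trans (hn i hi).le
    rw [Complex.sub_re, Complex.one_re] at hnear
    have hzq : z i ^ n = ((q ^ n : ℝ) : ℂ) * (z i / q) ^ n := by
      rw [div_pow, Complex.ofReal_pow,
        mul_div_cancel₀ _ (pow_ne_zero _ (Complex.ofReal_ne_zero.2 hq0.ne'))]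
    rw [Complex.sub_re, Complex.one_re, hzq, Complex.re_ofReal_mul]
    nlinarith [abs_le.1 hnear]
  have hM : ∑ i ∈ M, (1 - z i ^ n).re ≤ M.card - q ^ n / 2 := by
    have hcard : (1 : ℝ) ≤ M.card := by exact_mod_cast hMne.card_pos
    calc ∑ i ∈ M, (1 - z i ^ n).re ≤ ∑ i ∈ M, (1 - q ^ n / 2) := Finset.sum_le_sum hterm
      _ = M.card * (1 - q ^ n / 2) := by rw [Finset.sum_const, nsmul_eq_mul]
      _ ≤ M.card - q ^ n / 2 := by nlinarith
  have hbound := tsum_re_one_sub_pow_le hre hsq M hr hMr n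
  rw [mul_comm (Real.log s), Real.exp_nat_mul, Real.exp_log (by linarith)]
  linarith

end LiSums

theorem norm_sub_sq_sub_norm_add_sub_sq (a β : ℝ) (ρ : ℂ) :
    ‖ρ - a‖ ^ 2 - ‖ρ + a - 2 * β‖ ^ 2 = 4 * (β - a) * (ρ.re - β) := by
  simp only [← Complex.normSq_eq_norm_sq, Complex.normSq_apply, Complex.sub_re, Complex.add_re,
    Complex.sub_im, Complex.add_im, Complex.ofReal_re, Complex.ofReal_im, Complex.mul_re,
    Complex.mul_im]
  norm_num
  ring

theorem norm_div_le_one_iff_re_le {a β : ℝ} (hβ : a < β) {ρ : ℂ} (hρ : ρ + a - 2 * β ≠ 0) :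
    ‖(ρ - a) / (ρ + a - 2 * β)‖ ≤ 1 ↔ ρ.re ≤ β := by
  rw [norm_div, div_le_one (norm_pos_iff.2 hρ), ← sq_le_sq₀ (norm_nonneg _) (norm_nonneg _),
    ← sub_nonpos, norm_sub_sq_sub_norm_add_sub_sq]
  constructor <;> intro h <;> nlinarith

theorem summable_re_div_and_norm_div_sq {ι : Type*} {d : ι → ℂ}
    (hd : Summable fun i => (1 + |(d i).re|) / (1 + ‖d i‖) ^ 2) (c : ℝ) :
    (Summable fun i => ((c : ℂ) / d i).re) ∧ Summable fun i => ‖(c : ℂ) / d i‖ ^ 2 := by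
  have hfar : ∀ᶠ i in cofinite, 1 ≤ ‖d i‖ := by
    filter_upwards [hd.tendsto_cofinite_zero.eventually_lt_const (by norm_num : (0 : ℝ) < 1 / 4)]
      with i hi
    by_contra! h
    have : (1 : ℝ) / 4 ≤ (1 + |(d i).re|) / (1 + ‖d i‖) ^ 2 := by
      rw [div_le_div_iff₀ (by norm_num) (by positivity)]
      nlinarith [abs_nonneg (d i).re, norm_nonneg (d i)]
    linarith
  have hinv : ∀ i, 1 ≤ ‖d i‖ → 1 / ‖d i‖ ^ 2 ≤ 4 / (1 + ‖d i‖) ^ 2 := fun i hi => by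
    rw [div_le_div_iff₀ (by positivity) (by positivity)]
    nlinarith
  constructor
  · refine Summable.of_norm_bounded_eventually (hd.mul_left (4 * |c|)) ?_
    filter_upwards [hfar] with i hi
    have hre : ((c : ℂ) / d i).re = c * (d i).re * (1 / ‖d i‖ ^ 2) := by
      rw [div_eq_mul_inv, Complex.re_ofReal_mul, Complex.inv_re, Complex.normSq_eq_norm_sq]
      ring
    rw [Real.norm_eq_abs, hre, abs_mul, abs_mul,
      abs_of_nonneg (by positivity : (0 : ℝ) ≤ 1 / ‖d i‖ ^ 2)]
    calc |c| * |(d i).re| * (1 / ‖d i‖ ^ 2)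
        ≤ |c| * (1 + |(d i).re|) * (4 / (1 + ‖d i‖) ^ 2) :=
          mul_le_mul (by gcongr; linarith) (hinv i hi) (by positivity) (by positivity)
      _ = _ := by ring
  · refine Summable.of_norm_bounded_eventually (hd.mul_left (4 * c ^ 2)) ?_
    filter_upwards [hfar] with i hi
    rw [Real.norm_of_nonneg (by positivity), norm_div, Complex.norm_real, Real.norm_eq_abs,
      div_pow, sq_abs, div_eq_mul_one_div (c ^ 2)]
    calc c ^ 2 * (1 / ‖d i‖ ^ 2) ≤ c ^ 2 * (4 / (1 + ‖d i‖) ^ 2) :=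
          mul_le_mul_of_nonneg_left (hinv i hi) (sq_nonneg c)
      _ ≤ c ^ 2 * (4 / (1 + ‖d i‖) ^ 2) * (1 + |(d i).re|) :=
          le_mul_of_one_le_right (by positivity) (by linarith [abs_nonneg (d i).re])
      _ = _ := by ring

theorem Summable.one_add_abs_re_div_of_abs_re_sub_le {ι : Type*} {x : ι → ℝ} {d : ι → ℂ} {K : ℝ}
    (h : Summable fun i => (1 + |x i|) / (1 + ‖d i‖) ^ 2) (hK : ∀ i, |(d i).re - x i| ≤ K) :
    Summable fun i => (1 + |(d i).re|) / (1 + ‖d i‖) ^ 2 := by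
  refine (h.mul_left (1 + K)).of_nonneg_of_le (fun i => by positivity) fun i => ?_
  rw [← mul_div_assoc]
  gcongr
  have := abs_sub_abs_le_abs_sub (d i).re (x i)
  have hK0 : 0 ≤ K := (abs_nonneg _).trans (hK i)
  nlinarith [mul_nonneg hK0 (abs_nonneg (x i)), hK i]

theorem modified_li_criterion_abstract_general (a β : ℝ) (hβ : a < β)
    {ι : Type*} (ρ : ι → ℂ)
    (hne : ∀ i, ρ i ≠ 2 * β - a)
    (hsum : Summable fun i =>
      (1 + |(ρ i).re|) / (1 + ‖ρ i + a - 2 * β‖) ^ 2)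
    (σ : ι ≃ ι) (hσ : ∀ i, ρ (σ i) = 2 * β - ρ i) :
    (∀ n : ℕ, 1 ≤ n →
      Summable fun i => (1 - ((ρ i - a) / (ρ i + a - 2 * β)) ^ n).re) ∧
    (((∀ i, (ρ i).re = β) ↔
      (∀ n : ℕ, 1 ≤ n →
        0 ≤ ∑' i, (1 - ((ρ i - a) / (ρ i + a - 2 * β)) ^ n).re)) ∧
    ((∀ n : ℕ, 1 ≤ n →
        0 ≤ ∑' i, (1 - ((ρ i - a) / (ρ i + a - 2 * β)) ^ n).re) ↔
      (∀ ε : ℝ, 0 < ε → ∃ c : ℝ, 0 < c ∧ ∀ n : ℕ, 1 ≤ n →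
        -c * Real.exp (ε * n) ≤
          ∑' i, (1 - ((ρ i - a) / (ρ i + a - 2 * β)) ^ n).re))) := by
  have hd : ∀ i, ρ i + a - 2 * β ≠ 0 := fun i h => hne i (by linear_combination h)
  have hz : ∀ i, (ρ i - a) / (ρ i + a - 2 * β) - 1 =
      ((2 * (β - a) : ℝ) : ℂ) / (ρ i + a - 2 * β) :=
    fun i => by field_simp [hd i]; push_cast; ring
  obtain ⟨hre, hsq⟩ := summable_re_div_and_norm_div_sq
    (hsum.one_add_abs_re_div_of_abs_re_sub_le (K := |a - 2 * β|)
      fun i => (congrArg abs (by simp; ring)).le) (2 * (β - a))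
  replace hre := hre.congr fun i => congrArg Complex.re (hz i).symm
  replace hsq := hsq.congr fun i => congrArg (‖·‖ ^ 2) (hz i).symm
  have hcycle : List.TFAE [∀ i, (ρ i).re = β,
      ∀ n : ℕ, 1 ≤ n → 0 ≤ ∑' i, (1 - ((ρ i - a) / (ρ i + a - 2 * β)) ^ n).re,
      ∀ ε : ℝ, 0 < ε → ∃ c : ℝ, 0 < c ∧ ∀ n : ℕ, 1 ≤ n →
        -c * Real.exp (ε * n) ≤ ∑' i, (1 - ((ρ i - a) / (ρ i + a - 2 * β)) ^ n).re] := by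
    tfae_have 1 → 2 := fun h n _ => tsum_nonneg fun i =>
      re_one_sub_pow_nonneg ((norm_div_le_one_iff_re_le hβ (hd i)).2 (h i).le) n
    tfae_have 2 → 3 := fun h ε _ =>
      ⟨1, one_pos, fun n hn => by nlinarith [h n hn, Real.exp_pos (ε * n)]⟩
    tfae_have 3 → 1 := by
      intro h3 i
      by_contra hi
      obtain ⟨j, hj⟩ : ∃ j, β < (ρ j).re := by
        rcases lt_or_gt_of_ne hi with hlt | hgt
        · exact ⟨σ i, by rw [hσ]; simp; linarith⟩
        · exact ⟨i, hgt⟩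
      have hzj : 1 < ‖(ρ j - a) / (ρ j + a - 2 * β)‖ :=
        lt_of_not_ge fun h => hj.not_ge ((norm_div_le_one_iff_re_le hβ (hd j)).1 h)
      obtain ⟨ε, hε, hlt⟩ := exists_frequently_tsum_re_one_sub_pow_lt hre hsq hzj
      obtain ⟨c, -, hc⟩ := h3 ε hε
      obtain ⟨n, hn, hlt⟩ := (hlt c).forall_exists_of_atTop 1
      exact (hlt.trans_le (hc n hn)).false
    tfae_finish
  exact ⟨fun n _ => summable_re_one_sub_pow hre hsq n, hcycle.out 0 1, hcycle.out 1 2⟩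

/-- Abstract form of the modified Li criterion (Theorem 3.2 of the paper). -/
theorem modified_li_criterion_abstract (a β : ℝ) (hβ : a < β)
    {ι : Type*} [Countable ι] (ρ : ι → ℂ)
    (hne : ∀ i, ρ i ≠ 2 * β - a) (hne' : ∀ i, ρ i ≠ a)
    (hsum : Summable fun i =>
      (1 + |(ρ i).re|) / (1 + ‖ρ i + a - 2 * β‖) ^ 2)
    (hsum' : Summable fun i =>
      (1 + |(ρ i).re|) / (1 + ‖ρ i - a‖) ^ 2)
    (σ : ι ≃ ι) (hσ : ∀ i, ρ (σ i) = 2 * β - ρ i) :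
    (∀ n : ℕ, 1 ≤ n →
      Summable fun i => (1 - ((ρ i - a) / (ρ i + a - 2 * β)) ^ n).re) ∧
    (((∀ i, (ρ i).re = β) ↔
      (∀ n : ℕ, 1 ≤ n →
        0 ≤ ∑' i, (1 - ((ρ i - a) / (ρ i + a - 2 * β)) ^ n).re)) ∧
    ((∀ n : ℕ, 1 ≤ n →
        0 ≤ ∑' i, (1 - ((ρ i - a) / (ρ i + a - 2 * β)) ^ n).re) ↔
      (∀ ε : ℝ, 0 < ε → ∃ c : ℝ, 0 < c ∧ ∀ n : ℕ, 1 ≤ n →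
        -c * Real.exp (ε * n) ≤
          ∑' i, (1 - ((ρ i - a) / (ρ i + a - 2 * β)) ^ n).re))) :=
  modified_li_criterion_abstract_general a β hβ ρ hne hsum σ hσ
end

section
/- Let a be a real number, let ι be a countable index set, let (ρ_i)_{i∈ι} be a family of complex numbers with ρ_i ≠ a and ρ_i ≠ 1 − a for all i, and suppose there is a bijection σ : ι → ι with ρ_{σ(i)} = 1 − \overline{ρ_i} for all i. Let n be a positive integer and suppose the family i ↦ 1 − ((ρ_i − a)/(ρ_i + a − 1))^{n} is summable. Then the family i ↦ 1 − ((ρ_i − a)/(ρ_i + a − 1))^{−n} is summable and ∑_i [1 − ((ρ_i − a)/(ρ_i + a − 1))^{−n}] equals the complex conjugate of ∑_i [1 − ((ρ_i − a)/(ρ_i + a − 1))^{n}]. -/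
lemma key_term (a : ℝ) (z : ℂ) (ha : z ≠ a) (hb : z ≠ 1 - a) (n : ℕ) :
    1 - ((z - a) / (z + a - 1)) ^ (-(n : ℤ)) =
      starRingEnd ℂ (1 - (((1 - starRingEnd ℂ z) - a) / ((1 - starRingEnd ℂ z) + a - 1)) ^ n) := by
  have h1 : z - (a : ℂ) ≠ 0 := sub_ne_zero.mpr ha
  have h2 : z + a - 1 ≠ 0 := by
    intro h; apply hb; linear_combination h
  have hconj : starRingEnd ℂ (((1 - starRingEnd ℂ z) - a) / ((1 - starRingEnd ℂ z) + a - 1))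
      = (z + a - 1) / (z - a) := by
    rw [map_div₀]
    push_cast
    simp only [map_sub, map_add, map_one, Complex.conj_conj, Complex.conj_ofReal]
    rw [div_eq_div_iff]
    · ring
    · intro h
      apply h1
      linear_combination -h
    · exact h1
  rw [map_sub, map_one, map_pow, hconj, zpow_neg, zpow_natCast, ← inv_pow,
    inv_div]

/-- The symmetry `λ(-n, a) = conj (λ(n, a))` for the modified Li coefficients of a
multiset invariant under `ρ ↦ 1 - conj ρ`. -/
theorem modified_li_coeff_symmetry (a : ℝ) {ι : Type*} [Countable ι] (ρ : ι → ℂ)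
    (ha : ∀ i, ρ i ≠ a) (hb : ∀ i, ρ i ≠ 1 - a)
    (σ : ι ≃ ι) (hσ : ∀ i, ρ (σ i) = 1 - starRingEnd ℂ (ρ i))
    (n : ℕ) (hn : 0 < n)
    (hs : Summable fun i => 1 - ((ρ i - a) / (ρ i + a - 1)) ^ n) :
    (Summable fun i => 1 - ((ρ i - a) / (ρ i + a - 1)) ^ (-(n : ℤ))) ∧
    ∑' i, (1 - ((ρ i - a) / (ρ i + a - 1)) ^ (-(n : ℤ))) =
      starRingEnd ℂ (∑' i, (1 - ((ρ i - a) / (ρ i + a - 1)) ^ n)) := by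
  have hkey : ∀ i, 1 - ((ρ i - a) / (ρ i + a - 1)) ^ (-(n : ℤ)) =
      starRingEnd ℂ (1 - ((ρ (σ i) - a) / (ρ (σ i) + a - 1)) ^ n) := by
    intro i
    rw [hσ i]
    exact key_term a (ρ i) (ha i) (hb i) n
  have hs1 : Summable fun i => starRingEnd ℂ (1 - ((ρ (σ i) - a) / (ρ (σ i) + a - 1)) ^ n) := by
    apply Summable.map _ (starRingEnd ℂ) Complex.continuous_conj
    exact (σ.summable_iff (f := fun i => 1 - ((ρ i - a) / (ρ i + a - 1)) ^ n)).mpr hs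
  have hsum : Summable fun i => 1 - ((ρ i - a) / (ρ i + a - 1)) ^ (-(n : ℤ)) := by
    simpa only [← hkey] using hs1
  refine ⟨hsum, ?_⟩
  calc ∑' i, (1 - ((ρ i - a) / (ρ i + a - 1)) ^ (-(n : ℤ)))
      = ∑' i, starRingEnd ℂ (1 - ((ρ (σ i) - a) / (ρ (σ i) + a - 1)) ^ n) := by
        exact tsum_congr hkey
    _ = starRingEnd ℂ (∑' i, (1 - ((ρ (σ i) - a) / (ρ (σ i) + a - 1)) ^ n)) := by
        rw [Complex.conj_tsum]
    _ = starRingEnd ℂ (∑' i, (1 - ((ρ i - a) / (ρ i + a - 1)) ^ n)) := by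
        rw [σ.tsum_eq (f := fun i => 1 - ((ρ i - a) / (ρ i + a - 1)) ^ n)]
end

section
/- Let a be a real number, let n be a positive integer, and let s be a complex number with Re s > a. Then ∫_{−∞}^{0} e^{(s−a)x} · [∑_{l=1}^{n} binom(n, l) (1 − 2a)^{l} x^{l−1}/(l−1)!] dx = 1 − (1 + (2a − 1)/(s − a))^{n}. -/
/-!
With `c = s - a` (so `Re c > 0`), the `l`-th summand integrates against `e^{cx}` to a multiple of
the moment `∫_{-∞}^0 x^k e^{cx} dx = (-1)^k k! / c^{k+1}`, obtained from `∫_{-∞}^0 e^{cx} dx = 1/c`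
by integrating by parts. The `l`-th summand thus contributes `-binom(n, l) ((2a - 1)/c)^l`, and the
binomial theorem sums these to `1 - (1 + (2a - 1)/c)^n`.
-/

open MeasureTheory Set Filter

lemma integrableOn_pow_mul_cexp_Iic {c : ℂ} (hc : 0 < c.re) (k : ℕ) :
    IntegrableOn (fun x : ℝ => (x : ℂ) ^ k * Complex.exp (c * x)) (Iic 0) := by
  have hk : (-1 : ℝ) < k := by linarith [(Nat.cast_nonneg k : (0 : ℝ) ≤ k)]
  have h := integrableOn_rpow_mul_exp_neg_mul_rpow hk one_pos hc
  rw [← neg_zero] at h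
  refine ((integrableOn_Iic_iff_integrableOn_Iio (b := (0 : ℝ))).mpr h.comp_neg_Iio).mono'
    (by fun_prop) ?_
  filter_upwards [ae_restrict_mem measurableSet_Iic] with x (hx : x ≤ 0)
  simp [Complex.norm_exp, abs_of_nonpos hx]

lemma hasDerivAt_pow_succ_mul_cexp (c : ℂ) (k : ℕ) (x : ℝ) :
    HasDerivAt (fun x : ℝ => (x : ℂ) ^ (k + 1) * Complex.exp (c * x))
      ((k + 1) * ((x : ℂ) ^ k * Complex.exp (c * x)) +
        c * ((x : ℂ) ^ (k + 1) * Complex.exp (c * x))) x := by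
  have hpow : HasDerivAt (fun x : ℝ => (x : ℂ) ^ (k + 1)) ((k + 1) * (x : ℂ) ^ k) x := by
    simpa using (hasDerivAt_pow (k + 1) (x : ℂ)).comp_ofReal
  have hexp : HasDerivAt (fun x : ℝ => Complex.exp (c * x)) (c * Complex.exp (c * x)) x := by
    simpa [mul_comm] using ((hasDerivAt_id (x : ℂ)).const_mul c).comp_ofReal.cexp
  exact (hpow.fun_mul hexp).congr_deriv (by ring)

/-- Integration by parts: `∫ (x^{k+1} e^{cx})' = 0`, since `x^{k+1} e^{cx}` vanishes at `0` and,
being integrable together with its derivative, tends to `0` at `-∞`. -/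
lemma mul_integral_pow_succ_mul_cexp_Iic {c : ℂ} (hc : 0 < c.re) (k : ℕ) :
    c * ∫ x in Iic (0 : ℝ), (x : ℂ) ^ (k + 1) * Complex.exp (c * x) =
      -(k + 1) * ∫ x in Iic (0 : ℝ), (x : ℂ) ^ k * Complex.exp (c * x) := by
  have hint_k := integrableOn_pow_mul_cexp_Iic hc k
  have hint_succ := integrableOn_pow_mul_cexp_Iic hc (k + 1)
  have hderiv := fun x (_ : x ∈ Iic (0 : ℝ)) => hasDerivAt_pow_succ_mul_cexp c k x
  have hint_deriv := (hint_k.const_mul ((k : ℂ) + 1)).add (hint_succ.const_mul c)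
  have hftc := integral_Iic_of_hasDerivAt_of_tendsto' hderiv hint_deriv
    (tendsto_zero_of_hasDerivAt_of_integrableOn_Iic hderiv hint_deriv hint_succ)
  rw [integral_add (hint_k.const_mul _) (hint_succ.const_mul _), integral_const_mul,
    integral_const_mul] at hftc
  simp only [Complex.ofReal_zero, zero_pow (Nat.succ_ne_zero k), zero_mul, sub_zero] at hftc
  linear_combination hftc

theorem integral_pow_mul_cexp_Iic {c : ℂ} (hc : 0 < c.re) (k : ℕ) :
    ∫ x in Iic (0 : ℝ), (x : ℂ) ^ k * Complex.exp (c * x) =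
      (-1) ^ k * k.factorial / c ^ (k + 1) := by
  have hc0 : c ≠ 0 := by rintro rfl; simp at hc
  induction k with
  | zero => simpa using integral_exp_mul_complex_Iic hc 0
  | succ k ih =>
    apply mul_left_cancel₀ hc0
    rw [mul_integral_pow_succ_mul_cexp_Iic hc, ih, Nat.factorial_succ]
    push_cast
    field_simp
    ring

lemma sum_Icc_one_choose_mul_pow {R : Type*} [CommRing R] (z : R) (n : ℕ) :
    ∑ l ∈ Finset.Icc 1 n, (n.choose l : R) * z ^ l = (1 + z) ^ n - 1 := by
  rw [add_comm, add_pow, Nat.range_succ_eq_Icc_zero,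
    ← Finset.add_sum_Ioc_eq_sum_Icc (Nat.zero_le n), ← Finset.Icc_add_one_left_eq_Ioc]
  simp [mul_comm]

theorem test_function_transform_general (a : ℝ) (n : ℕ) (s : ℂ)
    (hs : a < s.re) :
    ∫ x in Set.Iio (0 : ℝ), Complex.exp ((s - a) * x) *
        ∑ l ∈ Finset.Icc 1 n, (n.choose l : ℂ) * (1 - 2 * a) ^ l * (x : ℂ) ^ (l - 1) /
          (Nat.factorial (l - 1) : ℂ) =
      1 - (1 + (2 * a - 1) / (s - a)) ^ n := by
  set c : ℂ := s - a
  have hc : 0 < c.re := by simpa [c] using hs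
  set coeff : ℕ → ℂ := fun l => (n.choose l : ℂ) * (1 - 2 * a) ^ l / (l - 1).factorial
  have hterm : ∀ l ∈ Finset.Icc 1 n,
      ∫ x in Iic (0 : ℝ), coeff l * ((x : ℂ) ^ (l - 1) * Complex.exp (c * x)) =
        -(n.choose l * ((2 * a - 1) / c) ^ l) := by
    intro l hl
    obtain ⟨m, rfl⟩ : ∃ m, l = m + 1 := ⟨l - 1, by grind⟩
    rw [integral_const_mul, integral_pow_mul_cexp_Iic hc, Nat.add_sub_cancel,
      show (2 * a - 1 : ℂ) = -1 * (1 - 2 * a) by ring, div_pow, mul_pow, pow_succ (-1 : ℂ)]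
    simp only [coeff, Nat.add_sub_cancel]
    have hfac := Nat.cast_ne_zero (R := ℂ) |>.mpr m.factorial_ne_zero
    field_simp
  calc _ = ∫ x in Iic (0 : ℝ), ∑ l ∈ Finset.Icc 1 n,
          coeff l * ((x : ℂ) ^ (l - 1) * Complex.exp (c * x)) := by
        rw [setIntegral_congr_set Iio_ae_eq_Iic]
        congr 1 with x
        rw [Finset.mul_sum]
        exact Finset.sum_congr rfl fun l _ => by ring
    _ = ∑ l ∈ Finset.Icc 1 n, -(n.choose l * ((2 * a - 1) / c) ^ l) := by
        rw [integral_finsetSum _ fun l _ => (integrableOn_pow_mul_cexp_Iic hc _).const_mul _]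
        exact Finset.sum_congr rfl hterm
    _ = _ := by
        rw [Finset.sum_neg_distrib, sum_Icc_one_choose_mul_pow]
        ring

/-- Laplace transform of the test function `f_n`: for `Re s > a`,
`∫_{-∞}^{0} e^{(s-a)x} P_n(x) dx = 1 - (1 + (2a-1)/(s-a))^n`. -/
theorem test_function_transform (a : ℝ) (n : ℕ) (hn : 0 < n) (s : ℂ)
    (hs : a < s.re) :
    ∫ x in Set.Iio (0 : ℝ), Complex.exp ((s - a) * x) *
        ∑ l ∈ Finset.Icc 1 n, (n.choose l : ℂ) * (1 - 2 * a) ^ l * (x : ℂ) ^ (l - 1) /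
          (Nat.factorial (l - 1) : ℂ) =
      1 - (1 + (2 * a - 1) / (s - a)) ^ n :=
  test_function_transform_general a n s hs
end

section
/- Let a < 0 be a real number, let X > 1 be a real number, and let n be a positive integer. Then ∫_{−log X}^{0} e^{−ax} · [∑_{l=1}^{n} binom(n, l) (1 − 2a)^{l} x^{l−1}/(l−1)!] dx = 1 − (1 − (2a − 1)/a)^{n} + ∑_{l=1}^{n} binom(n, l) (2a − 1)^{l} X^{a} ∑_{k=0}^{l−1} (log X)^{k}/(k! (−a)^{l−k}). -/
/-!
Writing `eₘ(z) = ∑_{k<m} z^k/k!` for the truncated exponential series, `eₘ₊₁' = eₘ` makes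
`-e^{-ax} eₘ₊₁(ax)/a^{m+1}` an antiderivative of `e^{-ax} x^m/m!`. So the `l`-th summand integrates
over `[-log X, 0]` to `X^a` times a polynomial in `log X` minus `binom(n, l) ((1 - 2a)/a)^l`, and by
the binomial theorem these constants add up to `(1 + (1 - 2a)/a)^n - 1`.
-/

open Finset Real intervalIntegral
open scoped Nat

lemma hasDerivAt_sum_range_pow_div_factorial {𝕜 : Type*} [NontriviallyNormedField 𝕜] [CharZero 𝕜]
    (m : ℕ) (z : 𝕜) :
    HasDerivAt (fun z : 𝕜 => ∑ k ∈ range (m + 1), z ^ k / k !) (∑ k ∈ range m, z ^ k / k !) z := by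
  refine (HasDerivAt.fun_sum fun k _ => (hasDerivAt_pow k z).div_const (k ! : 𝕜)).congr_deriv ?_
  rw [sum_range_succ', Nat.cast_zero, zero_mul, zero_div, add_zero]
  refine sum_congr rfl fun k _ => ?_
  rw [Nat.factorial_succ, Nat.add_sub_cancel]
  push_cast
  field_simp

lemma hasDerivAt_neg_exp_mul_sum_range_pow_div_factorial {a : ℝ} (ha : a ≠ 0) (m : ℕ) (x : ℝ) :
    HasDerivAt (fun x => -exp (-a * x) * (∑ k ∈ range (m + 1), (a * x) ^ k / k !) / a ^ (m + 1))
      (exp (-a * x) * x ^ m / m !) x := by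
  have hexp : HasDerivAt (fun x => exp (-a * x)) (exp (-a * x) * -a) x :=
    ((hasDerivAt_id x).const_mul (-a)).exp.congr_deriv (by simp)
  have hsum := (hasDerivAt_sum_range_pow_div_factorial m (a * x)).comp x
    (((hasDerivAt_id x).const_mul a).congr_deriv (mul_one a))
  refine ((hexp.neg.mul hsum).div_const (a ^ (m + 1))).congr_deriv ?_
  simp only [Function.comp_apply, Pi.neg_apply, sum_range_succ, mul_pow, pow_succ]
  field_simp
  ring

lemma integral_exp_neg_mul_mul_pow_div_factorial {a : ℝ} (ha : a ≠ 0) (m : ℕ) (b : ℝ) :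
    ∫ x in b..0, exp (-a * x) * x ^ m / m ! =
      (exp (-a * b) * (∑ k ∈ range (m + 1), (a * b) ^ k / k !) - 1) / a ^ (m + 1) := by
  rw [integral_eq_sub_of_hasDerivAt
    (fun x _ => hasDerivAt_neg_exp_mul_sum_range_pow_div_factorial ha m x)
    ((by fun_prop : Continuous fun x => exp (-a * x) * x ^ m / m !).intervalIntegrable _ _)]
  simp [sum_range_succ']
  ring

lemma sum_range_mul_pow_div_factorial_div_pow {K : Type*} [Field K] {c : K} (hc : c ≠ 0)
    (l : ℕ) (y : K) :
    (∑ k ∈ range l, (c * y) ^ k / k !) / c ^ l = ∑ k ∈ range l, y ^ k / (k ! * c ^ (l - k)) := by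
  rw [sum_div]
  refine sum_congr rfl fun k hk => ?_
  rw [← Nat.sub_add_cancel (mem_range.mp hk).le, pow_add, mul_pow, Nat.add_sub_cancel]
  field_simp

lemma integral_neg_zero_exp_neg_mul_mul_pow_div_factorial {a : ℝ} (ha : a ≠ 0) (b L : ℝ)
    (m : ℕ) :
    ∫ x in -L..0, exp (-a * x) * (b ^ (m + 1) * x ^ m / m !) =
      (-b) ^ (m + 1) * exp (a * L) * ∑ k ∈ range (m + 1), L ^ k / (k ! * (-a) ^ (m + 1 - k)) -
        (b / a) ^ (m + 1) := by
  have hratio : (b / a) ^ (m + 1) = (-b) ^ (m + 1) / (-a) ^ (m + 1) := by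
    rw [← div_pow, neg_div_neg_eq]
  rw [← sum_range_mul_pow_div_factorial_div_pow (neg_ne_zero.mpr ha)]
  calc _ = b ^ (m + 1) * ∫ x in -L..0, exp (-a * x) * x ^ m / m ! := by
        rw [← integral_const_mul]
        congr 1 with x
        ring
    _ = (b / a) ^ (m + 1) * exp (a * L) * (∑ k ∈ range (m + 1), (-a * L) ^ k / k !) -
          (b / a) ^ (m + 1) := by
        rw [integral_exp_neg_mul_mul_pow_div_factorial ha, neg_mul_neg, mul_neg, ← neg_mul, div_pow]
        ring
    _ = _ := by
        rw [hratio]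
        ring

lemma sum_Icc_choose_mul_pow {R : Type*} [CommRing R] (n : ℕ) (r : R) :
    ∑ l ∈ Icc 1 n, (n.choose l : R) * r ^ l = (1 + r) ^ n - 1 := by
  rw [add_comm, add_pow, range_eq_Ico, sum_eq_sum_Ico_succ_bot n.succ_pos, zero_add,
    Nat.succ_eq_add_one, Ico_add_one_right_eq_Icc]
  simp [mul_comm]

theorem truncated_transform_at_zero_general (a : ℝ) (ha : a < 0) (X : ℝ) (hX : 1 < X)
    (n : ℕ) :
    ∫ x in (-Real.log X)..(0 : ℝ), Real.exp (-a * x) *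
        ∑ l ∈ Finset.Icc 1 n, (n.choose l : ℝ) * (1 - 2 * a) ^ l * x ^ (l - 1) /
          (Nat.factorial (l - 1) : ℝ) =
      1 - (1 - (2 * a - 1) / a) ^ n +
        ∑ l ∈ Finset.Icc 1 n, (n.choose l : ℝ) * (2 * a - 1) ^ l * X ^ a *
          ∑ k ∈ Finset.range l,
            (Real.log X) ^ k / ((Nat.factorial k : ℝ) * (-a) ^ (l - k)) := by
  have hXa : exp (a * log X) = X ^ a := by
    rw [rpow_def_of_pos (zero_lt_one.trans hX), mul_comm]
  have hterm : ∀ l ∈ Icc 1 n,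
      ∫ x in -log X..0, exp (-a * x) * ((n.choose l : ℝ) * (1 - 2 * a) ^ l * x ^ (l - 1) / (l - 1)!) =
        (n.choose l : ℝ) * (2 * a - 1) ^ l * X ^ a *
          ∑ k ∈ range l, log X ^ k / (k ! * (-a) ^ (l - k)) -
        (n.choose l : ℝ) * ((1 - 2 * a) / a) ^ l := by
    intro l hl
    obtain ⟨m, rfl⟩ : ∃ m, l = m + 1 := ⟨l - 1, by grind⟩
    rw [Nat.add_sub_cancel]
    calc _ = (n.choose (m + 1) : ℝ) *
          ∫ x in -log X..0, exp (-a * x) * ((1 - 2 * a) ^ (m + 1) * x ^ m / m !) := by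
          rw [← integral_const_mul]
          congr 1 with x
          ring
      _ = _ := by
          rw [integral_neg_zero_exp_neg_mul_mul_pow_div_factorial ha.ne, neg_sub, hXa]
          ring
  conv_lhs => simp only [mul_sum]
  rw [integral_finsetSum fun l _ => (by fun_prop : Continuous _).intervalIntegrable _ _,
    sum_congr rfl hterm, sum_sub_distrib, sum_Icc_choose_mul_pow,
    show 1 + (1 - 2 * a) / a = 1 - (2 * a - 1) / a by ring]
  abel

/-- Evaluation of the truncated transform `H_{n,X}(0)`. -/
theorem truncated_transform_at_zero (a : ℝ) (ha : a < 0) (X : ℝ) (hX : 1 < X)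
    (n : ℕ) (hn : 0 < n) :
    ∫ x in (-Real.log X)..(0 : ℝ), Real.exp (-a * x) *
        ∑ l ∈ Finset.Icc 1 n, (n.choose l : ℝ) * (1 - 2 * a) ^ l * x ^ (l - 1) /
          (Nat.factorial (l - 1) : ℝ) =
      1 - (1 - (2 * a - 1) / a) ^ n +
        ∑ l ∈ Finset.Icc 1 n, (n.choose l : ℝ) * (2 * a - 1) ^ l * X ^ a *
          ∑ k ∈ Finset.range l,
            (Real.log X) ^ k / ((Nat.factorial k : ℝ) * (-a) ^ (l - k)) :=
  truncated_transform_at_zero_general a ha X hX n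
end

section
/- Let λ > 0 and μ ≥ 0 be real numbers and let a < 0 be a real number satisfying −aλ < λ + μ. Then ∫_{0}^{∞} (1 − e^{aλx}) · e^{−(λ+μ)x}/(1 − e^{−x}) dx = −∑_{k=1}^{∞} (aλ)^{k} ∑_{m=0}^{∞} 1/(m + λ + μ)^{k+1}, where the double series on the right converges absolutely. -/
/-!
With `c = λ + μ` and `r = aλ`, expanding `1 / (1 - e^{-x})` as a geometric series turns the
integrand into `∑ₘ (e^{-(m+c)x} - e^{-(m+c-r)x})`. Since `r ≤ 0` these terms are nonnegative,
so the integral may be taken termwise and equals `∑ₘ (1/(m+c) - 1/(m+c-r))`. On the other side,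
summing the double series over `k` first gives the geometric sums
`∑ₖ r^{k+1}/(m+c)^{k+2} = 1/(m+c-r) - 1/(m+c)`, and absolute convergence for `|r| < c` allows
the order of summation to be exchanged.
-/

open MeasureTheory Set Real

theorem hasSum_pow_succ_mul_one_div_pow {r s : ℝ} (hrs : |r| < s) :
    HasSum (fun k : ℕ => r ^ (k + 1) * (1 / s ^ (k + 2))) (1 / (s - r) - 1 / s) := by
  have hs : 0 < s := (abs_nonneg r).trans_lt hrs
  have hsr : s - r ≠ 0 := by linarith [le_abs_self r]
  have hq : |r / s| < 1 := by rwa [abs_div, abs_of_pos hs, div_lt_one hs]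
  have hlimit : 1 / (s - r) - 1 / s = r / s ^ 2 * (1 - r / s)⁻¹ := by
    rw [one_sub_div hs.ne', inv_div]
    field_simp
    ring
  rw [hlimit]
  refine ((hasSum_geometric_of_abs_lt_one hq).mul_left (r / s ^ 2)).congr_fun fun k => ?_
  rw [div_pow]
  field_simp
  ring

theorem summable_one_div_nat_add_sub_one_div_nat_add {c d : ℝ} (hd : 0 < d) (hdc : d ≤ c) :
    Summable fun m : ℕ => 1 / ((m : ℝ) + d) - 1 / ((m : ℝ) + c) := by
  have hsq : Summable fun m : ℕ => 1 / ((m : ℝ) + d) ^ 2 := by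
    refine ((Real.summable_one_div_nat_add_rpow d 2).2 one_lt_two).congr fun m => ?_
    rw [abs_of_pos (by positivity), Real.rpow_two]
  refine (hsq.mul_left (c - d)).of_nonneg_of_le (fun m => ?_) (fun m => ?_)
  · rw [sub_nonneg]
    gcongr
  · have hmd : 0 < (m : ℝ) + d := by positivity
    have hmc : 0 < (m : ℝ) + c := by linarith
    have hdiff :
        1 / ((m : ℝ) + d) - 1 / ((m : ℝ) + c) = (c - d) * (1 / ((m + d) * (m + c))) := by
      field_simp
      ring
    rw [hdiff, sq]
    gcongr

theorem summable_abs_pow_succ_mul_one_div_nat_add_pow {r c : ℝ} (hrc : |r| < c) :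
    Summable fun p : ℕ × ℕ => |r ^ (p.1 + 1) * (1 / ((p.2 : ℝ) + c) ^ (p.1 + 2))| := by
  have hc : 0 < c := (abs_nonneg r).trans_lt hrc
  have habs : ∀ k m : ℕ, |r ^ (k + 1) * (1 / ((m : ℝ) + c) ^ (k + 2))|
      = |r| ^ (k + 1) * (1 / ((m : ℝ) + c) ^ (k + 2)) := fun k m => by
    rw [abs_mul, abs_pow, abs_of_pos (by positivity : 0 < 1 / ((m : ℝ) + c) ^ (k + 2))]
  have hrow (m : ℕ) : HasSum (fun k : ℕ => |r| ^ (k + 1) * (1 / ((m : ℝ) + c) ^ (k + 2)))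
      (1 / ((m : ℝ) + (c - |r|)) - 1 / ((m : ℝ) + c)) := by
    rw [← add_sub_assoc]
    refine hasSum_pow_succ_mul_one_div_pow ?_
    rw [abs_abs]
    linarith [(m.cast_nonneg : (0 : ℝ) ≤ m)]
  rw [← (Equiv.prodComm ℕ ℕ).summable_iff]
  refine (summable_prod_of_nonneg fun _ => abs_nonneg _).2 ⟨fun m => ?_, ?_⟩
  · simpa only [Equiv.prodComm_apply, Prod.fst_swap, Prod.snd_swap, habs] using (hrow m).summable
  · simp only [Equiv.prodComm_apply, Prod.fst_swap, Prod.snd_swap, habs, fun m => (hrow m).tsum_eq]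
    exact summable_one_div_nat_add_sub_one_div_nat_add (by linarith) (by linarith [abs_nonneg r])

theorem tsum_pow_succ_mul_tsum_one_div_nat_add_pow {r c : ℝ} (hrc : |r| < c) :
    ∑' k : ℕ, r ^ (k + 1) * ∑' m : ℕ, 1 / ((m : ℝ) + c) ^ (k + 2)
      = ∑' m : ℕ, (1 / ((m : ℝ) + c - r) - 1 / ((m : ℝ) + c)) := by
  have hsum : Summable fun p : ℕ × ℕ => r ^ (p.1 + 1) * (1 / ((p.2 : ℝ) + c) ^ (p.1 + 2)) :=
    (summable_abs_pow_succ_mul_one_div_nat_add_pow hrc).of_abs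
  simp_rw [← tsum_mul_left]
  rw [← hsum.tsum_comm]
  refine tsum_congr fun m => (hasSum_pow_succ_mul_one_div_pow ?_).tsum_eq
  linarith [(m.cast_nonneg : (0 : ℝ) ≤ m)]

theorem hasSum_exp_sub_exp_nat_add_mul {x : ℝ} (hx : 0 < x) (r c : ℝ) :
    HasSum (fun m : ℕ => exp (-((m : ℝ) + c) * x) - exp (-((m : ℝ) + c - r) * x))
      ((1 - exp (r * x)) * exp (-c * x) / (1 - exp (-x))) := by
  have hq : exp (-x) < 1 := exp_lt_one_iff.2 (neg_lt_zero.2 hx)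
  rw [div_eq_mul_inv]
  refine ((hasSum_geometric_of_lt_one (exp_nonneg _) hq).mul_left
    ((1 - exp (r * x)) * exp (-c * x))).congr_fun fun m => ?_
  rw [← exp_nat_mul, sub_mul, sub_mul, one_mul, ← exp_add, ← exp_add, ← exp_add]
  congr 2 <;> ring

theorem integral_exp_neg_mul_Ioi_zero {s : ℝ} (hs : 0 < s) :
    ∫ x in Ioi (0 : ℝ), exp (-s * x) = 1 / s := by
  rw [integral_exp_mul_Ioi (neg_neg_of_pos hs)]
  simp [neg_div]

theorem integral_Ioi_one_sub_exp_mul_exp_div_one_sub_exp {r c : ℝ} (hr : r ≤ 0) (hc : 0 < c) :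
    ∫ x in Ioi (0 : ℝ), (1 - exp (r * x)) * exp (-c * x) / (1 - exp (-x))
      = ∑' m : ℕ, (1 / ((m : ℝ) + c) - 1 / ((m : ℝ) + c - r)) := by
  set g : ℕ → ℝ → ℝ := fun m x =>
    exp (-((m : ℝ) + c) * x) - exp (-((m : ℝ) + c - r) * x)
  have hpos (m : ℕ) : 0 < (m : ℝ) + c := by positivity
  have hpos' (m : ℕ) : 0 < (m : ℝ) + c - r := by linarith [hpos m]
  have hint (m : ℕ) : IntegrableOn (g m) (Ioi 0) :=
    (integrableOn_exp_mul_Ioi (neg_neg_of_pos (hpos m)) 0).sub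
      (integrableOn_exp_mul_Ioi (neg_neg_of_pos (hpos' m)) 0)
  have hval (m : ℕ) :
      ∫ x in Ioi (0 : ℝ), g m x = 1 / ((m : ℝ) + c) - 1 / ((m : ℝ) + c - r) := by
    rw [integral_sub (integrableOn_exp_mul_Ioi (neg_neg_of_pos (hpos m)) 0)
      (integrableOn_exp_mul_Ioi (neg_neg_of_pos (hpos' m)) 0),
      integral_exp_neg_mul_Ioi_zero (hpos m), integral_exp_neg_mul_Ioi_zero (hpos' m)]
  have hnorm (m : ℕ) : ∫ x in Ioi (0 : ℝ), ‖g m x‖ = ∫ x in Ioi (0 : ℝ), g m x := by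
    refine setIntegral_congr_fun measurableSet_Ioi fun x (hx : 0 < x) => norm_of_nonneg ?_
    refine sub_nonneg.2 (exp_le_exp.2 ?_)
    nlinarith
  rw [setIntegral_congr_fun measurableSet_Ioi fun x hx =>
    (hasSum_exp_sub_exp_nat_add_mul hx r c).tsum_eq.symm,
    ← integral_tsum_of_summable_integral_norm hint]
  · exact tsum_congr hval
  · simp_rw [hnorm, hval, add_sub_assoc]
    exact summable_one_div_nat_add_sub_one_div_nat_add hc (by linarith)

theorem archimedean_integral_I1_general (lam μ a : ℝ) (hlam : 0 < lam)
    (ha : a < 0) (h : -a * lam < lam + μ) :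
    Summable (fun p : ℕ × ℕ =>
      |(a * lam) ^ (p.1 + 1) * (1 / ((p.2 : ℝ) + lam + μ) ^ (p.1 + 2))|) ∧
    ∫ x in Set.Ioi (0 : ℝ),
        (1 - Real.exp (a * lam * x)) * Real.exp (-(lam + μ) * x) / (1 - Real.exp (-x)) =
      -∑' k : ℕ, (a * lam) ^ (k + 1) * ∑' m : ℕ, 1 / ((m : ℝ) + lam + μ) ^ (k + 2) := by
  have hr : a * lam < 0 := mul_neg_of_neg_of_pos ha hlam
  have hrc : |a * lam| < lam + μ := by rwa [abs_of_neg hr, ← neg_mul]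
  simp_rw [add_assoc]
  refine ⟨summable_abs_pow_succ_mul_one_div_nat_add_pow hrc, ?_⟩
  rw [integral_Ioi_one_sub_exp_mul_exp_div_one_sub_exp hr.le ((abs_nonneg _).trans_lt hrc),
    tsum_pow_succ_mul_tsum_one_div_nat_add_pow hrc, ← tsum_neg]
  simp_rw [neg_sub]

/-- Evaluation of the archimedean integral `I₁` as a double Hurwitz-zeta series. -/
theorem archimedean_integral_I1 (lam μ a : ℝ) (hlam : 0 < lam) (hμ : 0 ≤ μ)
    (ha : a < 0) (h : -a * lam < lam + μ) :
    Summable (fun p : ℕ × ℕ =>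
      |(a * lam) ^ (p.1 + 1) * (1 / ((p.2 : ℝ) + lam + μ) ^ (p.1 + 2))|) ∧
    ∫ x in Set.Ioi (0 : ℝ),
        (1 - Real.exp (a * lam * x)) * Real.exp (-(lam + μ) * x) / (1 - Real.exp (-x)) =
      -∑' k : ℕ, (a * lam) ^ (k + 1) * ∑' m : ℕ, 1 / ((m : ℝ) + lam + μ) ^ (k + 2) :=
  archimedean_integral_I1_general lam μ a hlam ha h
end

section
/- Let λ > 0 and μ ≥ 0 be real numbers, let a < 0 be a real number, and let n ≥ 2 be an integer. Then ∫_{0}^{∞} [∑_{l=2}^{n} binom(n, l) (−(1 − 2a)λx)^{l−1}/(l−1)!] · e^{−((1−a)λ+μ)x}/(1 − e^{−x}) dx = ∑_{l=2}^{n} binom(n, l) (−(1 − 2a)λ)^{l−1} ∑_{m=0}^{∞} 1/(m + (1 − a)λ + μ)^{l}. -/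
/-!
Expanding `1 / (1 - e^{-x}) = ∑ₘ e^{-m x}` turns `x^k e^{-s x} / (1 - e^{-x})` into a series of
Gamma integrands `x^k e^{-(m + s) x}` with integrals `k! / (m + s)^(k + 1)`; the series of these
integrals converges for `k ≥ 1`, so integral and sum may be exchanged. The theorem follows by
applying this to each monomial of the polynomial in the integrand.
-/

open MeasureTheory Real Set
open scoped Nat

lemma integrableOn_pow_mul_exp_neg_mul_Ioi (k : ℕ) {c : ℝ} (hc : 0 < c) :
    IntegrableOn (fun x : ℝ => x ^ k * exp (-c * x)) (Ioi 0) := by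
  refine (integrableOn_rpow_mul_exp_neg_mul_rpow (s := k) (p := 1)
    (neg_one_lt_zero.trans_le k.cast_nonneg) one_pos hc).congr_fun (fun x _ => ?_)
    measurableSet_Ioi
  simp only [rpow_one, rpow_natCast]

lemma integral_pow_mul_exp_neg_mul_Ioi (k : ℕ) {c : ℝ} (hc : 0 < c) :
    ∫ x in Ioi 0, x ^ k * exp (-c * x) = k ! / c ^ (k + 1) := by
  have h := integral_rpow_mul_exp_neg_mul_Ioi (a := k + 1) (by positivity) hc
  rw [Gamma_nat_eq_factorial, add_sub_cancel_right, ← Nat.cast_add_one] at h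
  simpa only [rpow_natCast, neg_mul, div_pow, one_pow, one_div_mul_eq_div] using h

lemma summable_one_div_nat_add_pow (s : ℝ) {p : ℕ} (hp : 1 < p) :
    Summable fun m : ℕ => 1 / ((m : ℝ) + s) ^ p := by
  refine Summable.of_norm (((summable_one_div_nat_add_rpow s p).mpr
    (by exact_mod_cast hp)).congr fun m => ?_)
  rw [norm_div, norm_one, norm_pow, norm_eq_abs, rpow_natCast]

lemma div_one_add_le_one_sub_exp_neg {x : ℝ} (hx : 0 ≤ x) : x / (1 + x) ≤ 1 - exp (-x) := by
  have h : exp (-x) ≤ 1 / (1 + x) := by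
    rw [exp_neg, one_div]
    exact inv_anti₀ (by linarith) (by linarith [add_one_le_exp x])
  have : x / (1 + x) = 1 - 1 / (1 + x) := by field_simp; ring
  linarith

lemma inv_one_sub_exp_neg_le {x : ℝ} (hx : 0 < x) : (1 - exp (-x))⁻¹ ≤ 1 + x⁻¹ := by
  calc (1 - exp (-x))⁻¹ ≤ (x / (1 + x))⁻¹ :=
        inv_anti₀ (by positivity) (div_one_add_le_one_sub_exp_neg hx.le)
    _ = 1 + x⁻¹ := by field_simp; ring

lemma hasSum_exp_neg_nat_add_mul {x : ℝ} (hx : 0 < x) (s : ℝ) :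
    HasSum (fun m : ℕ => exp (-((m : ℝ) + s) * x)) (exp (-s * x) / (1 - exp (-x))) := by
  have hq : exp (-x) < 1 := exp_lt_one_iff.mpr (neg_lt_zero.mpr hx)
  rw [div_eq_mul_inv]
  refine ((hasSum_geometric_of_lt_one (exp_nonneg _) hq).mul_left (exp (-s * x))).congr_fun
    fun m => ?_
  rw [← exp_nat_mul, ← exp_add]
  ring_nf

lemma integrableOn_pow_mul_exp_neg_mul_div_one_sub_exp_neg {k : ℕ} (hk : 1 ≤ k) {s : ℝ}
    (hs : 0 < s) :
    IntegrableOn (fun x : ℝ => x ^ k * exp (-s * x) / (1 - exp (-x))) (Ioi 0) := by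
  refine ((integrableOn_pow_mul_exp_neg_mul_Ioi (k - 1) hs).add
    (integrableOn_pow_mul_exp_neg_mul_Ioi k hs)).mono'
    (by fun_prop : Measurable _).aestronglyMeasurable ?_
  filter_upwards [self_mem_ae_restrict measurableSet_Ioi] with x (hx : 0 < x)
  have hd : 0 < 1 - exp (-x) := sub_pos.mpr (exp_lt_one_iff.mpr (neg_lt_zero.mpr hx))
  have hxk : x ^ k * x⁻¹ = x ^ (k - 1) := by
    rw [← pow_sub_one_mul (by omega), mul_inv_cancel_right₀ hx.ne']
  rw [norm_of_nonneg (by positivity), div_eq_mul_inv, mul_right_comm]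
  calc x ^ k * (1 - exp (-x))⁻¹ * exp (-s * x) ≤ x ^ k * (1 + x⁻¹) * exp (-s * x) := by
        gcongr; exact inv_one_sub_exp_neg_le hx
    _ = x ^ (k - 1) * exp (-s * x) + x ^ k * exp (-s * x) := by rw [← hxk]; ring

lemma integral_pow_mul_exp_neg_mul_div_one_sub_exp_neg {k : ℕ} (hk : 1 ≤ k) {s : ℝ}
    (hs : 0 < s) :
    ∫ x in Ioi 0, x ^ k * exp (-s * x) / (1 - exp (-x)) =
      k ! * ∑' m : ℕ, 1 / ((m : ℝ) + s) ^ (k + 1) := by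
  set F : ℕ → ℝ → ℝ := fun m x => x ^ k * exp (-((m : ℝ) + s) * x)
  have hF_int (m : ℕ) : ∫ x in Ioi 0, F m x = k ! / ((m : ℝ) + s) ^ (k + 1) :=
    integral_pow_mul_exp_neg_mul_Ioi k (by positivity)
  have hF_norm (m : ℕ) : ∫ x in Ioi 0, ‖F m x‖ = k ! / ((m : ℝ) + s) ^ (k + 1) := by
    rw [← hF_int]
    exact setIntegral_congr_fun measurableSet_Ioi fun x (hx : 0 < x) =>
      norm_of_nonneg (by positivity)
  have hsum : Summable fun m => ∫ x in Ioi 0, ‖F m x‖ := by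
    simpa only [hF_norm, mul_one_div] using
      (summable_one_div_nat_add_pow s (p := k + 1) (by omega)).mul_left (k ! : ℝ)
  have hF_tsum : ∀ x ∈ Ioi (0 : ℝ), ∑' m, F m x = x ^ k * exp (-s * x) / (1 - exp (-x)) :=
    fun x hx => by
      rw [tsum_mul_left, (hasSum_exp_neg_nat_add_mul hx s).tsum_eq, mul_div_assoc]
  rw [← setIntegral_congr_fun measurableSet_Ioi hF_tsum,
    ← integral_tsum_of_summable_integral_norm
      (fun m => integrableOn_pow_mul_exp_neg_mul_Ioi k (by positivity)) hsum,
    ← tsum_mul_left]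
  exact tsum_congr fun m => (hF_int m).trans (mul_one_div _ _).symm

theorem archimedean_integral_I2_general (lam μ a : ℝ) (hlam : 0 < lam) (hμ : 0 ≤ μ)
    (ha : a < 0) (n : ℕ) :
    ∫ x in Set.Ioi (0 : ℝ),
        (∑ l ∈ Finset.Icc 2 n, (n.choose l : ℝ) * (-(1 - 2 * a) * lam * x) ^ (l - 1) /
          (Nat.factorial (l - 1) : ℝ)) *
          Real.exp (-((1 - a) * lam + μ) * x) / (1 - Real.exp (-x)) =
      ∑ l ∈ Finset.Icc 2 n, (n.choose l : ℝ) * (-(1 - 2 * a) * lam) ^ (l - 1) *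
        ∑' m : ℕ, 1 / ((m : ℝ) + (1 - a) * lam + μ) ^ l := by
  set s := (1 - a) * lam + μ
  have hs : 0 < s := by nlinarith
  set c := -(1 - 2 * a) * lam
  set K : ℕ → ℝ → ℝ := fun k x => x ^ k * exp (-s * x) / (1 - exp (-x))
  have hK_int : ∀ l ∈ Finset.Icc 2 n, IntegrableOn (fun x => n.choose l * c ^ (l - 1) /
      ((l - 1) ! : ℝ) * K (l - 1) x) (Ioi 0) := fun l hl =>
    (integrableOn_pow_mul_exp_neg_mul_div_one_sub_exp_neg
      (by have := (Finset.mem_Icc.mp hl).1; omega) hs).const_mul _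
  calc _ = ∫ x in Ioi 0, ∑ l ∈ Finset.Icc 2 n,
        n.choose l * c ^ (l - 1) / ((l - 1) ! : ℝ) * K (l - 1) x := by
        refine setIntegral_congr_fun measurableSet_Ioi fun x _ => ?_
        simp only [K, Finset.sum_mul, Finset.sum_div, mul_pow]
        exact Finset.sum_congr rfl fun l _ => by ring
    _ = _ := by
        rw [integral_finsetSum _ hK_int]
        refine Finset.sum_congr rfl fun l hl => ?_
        have hl : 2 ≤ l := (Finset.mem_Icc.mp hl).1
        rw [integral_const_mul, integral_pow_mul_exp_neg_mul_div_one_sub_exp_neg (by omega) hs,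
          Nat.sub_add_cancel (by omega : 1 ≤ l)]
        simp only [s, ← add_assoc]
        field_simp

/-- Evaluation of the archimedean integral `I₂` as a sum of Hurwitz-zeta values. -/
theorem archimedean_integral_I2 (lam μ a : ℝ) (hlam : 0 < lam) (hμ : 0 ≤ μ)
    (ha : a < 0) (n : ℕ) (hn : 2 ≤ n) :
    ∫ x in Set.Ioi (0 : ℝ),
        (∑ l ∈ Finset.Icc 2 n, (n.choose l : ℝ) * (-(1 - 2 * a) * lam * x) ^ (l - 1) /
          (Nat.factorial (l - 1) : ℝ)) *
          Real.exp (-((1 - a) * lam + μ) * x) / (1 - Real.exp (-x)) =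
      ∑ l ∈ Finset.Icc 2 n, (n.choose l : ℝ) * (-(1 - 2 * a) * lam) ^ (l - 1) *
        ∑' m : ℕ, 1 / ((m : ℝ) + (1 - a) * lam + μ) ^ l :=
  archimedean_integral_I2_general lam μ a hlam hμ ha n
end

section
/- For all sufficiently large positive integers n, n! · ∫_{−∞}^{∞} |Γ((e^{n} − n) + it)/Γ((e^{n} + 1) + it)| dt ≤ e^{−n}, where Γ denotes the complex Gamma function. -/
/-!
Writing `s = a + it` with `a = eⁿ - n`, the functional equation gives
`Γ(s) / Γ(s + n + 1) = 1 / (s (s + 1) ⋯ (s + n))`. Bounding `|s| |s + 1| ≥ 1 + t²` and the other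
`n - 1` factors by `a` makes the integrand at most `a^{-(n-1)} / (1 + t²)`, so the integral is at
most `π / a^{n-1}`. Since `a ≥ e^{n-1}`, `n! ≤ nⁿ ≤ e^{n²/2}` and `π ≤ e²`, the claim reduces to
`n²/2 + 2 + n ≤ (n - 1)²`, which holds for `n ≥ 7`.
-/

open Finset MeasureTheory Real
open scoped Nat

theorem ascPochhammer_eval_eq_prod_range {R : Type*} [CommSemiring R] (n : ℕ) (r : R) :
    (ascPochhammer R n).eval r = ∏ k ∈ range n, (r + k) := by
  induction n with
  | zero => simp
  | succ n ih => simp [ascPochhammer_succ_right, ih, prod_range_succ]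

namespace Complex

theorem norm_Gamma_div_Gamma_add_nat {s : ℂ} (hs : 0 < s.re) (n : ℕ) :
    ‖Gamma s / Gamma (s + n)‖ = (∏ k ∈ range n, ‖s + k‖)⁻¹ := by
  have hs_ne : ∀ k : ℕ, s ≠ -k := fun k h => by
    have := congrArg re h
    simp only [neg_re, natCast_re] at this
    linarith [(Nat.cast_nonneg k : (0 : ℝ) ≤ k)]
  rw [← inv_div, norm_inv, Gamma_add_nat_div_Gamma_eq s hs_ne, ascPochhammer_eval_eq_prod_range,
    norm_prod]

theorem re_add_nat_le_norm_add_nat (s : ℂ) (k : ℕ) : s.re + k ≤ ‖s + k‖ := by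
  simpa using re_le_norm (s + k)

theorem pow_mul_one_add_sq_le_prod_norm_add_nat {s : ℂ} (hs : 1 ≤ s.re) {n : ℕ} (hn : 1 ≤ n) :
    s.re ^ (n - 1) * (1 + s.im ^ 2) ≤ ∏ k ∈ range (n + 1), ‖s + k‖ := by
  obtain ⟨m, rfl⟩ : ∃ m, n = m + 1 := ⟨n - 1, by omega⟩
  rw [add_tsub_cancel_right, add_assoc, add_comm m, prod_range_add, mul_comm]
  have hfirst : 1 + s.im ^ 2 ≤ ∏ k ∈ range 2, ‖s + k‖ := by
    have h0 := sq_norm_sub_sq_re s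
    have h1 := sq_norm_sub_sq_re (s + 1)
    simp only [add_re, one_re, add_im, one_im, add_zero] at h1
    have hle : ‖s‖ ≤ ‖s + 1‖ := by nlinarith [norm_nonneg s, norm_nonneg (s + 1)]
    simp only [prod_range_succ, prod_range_zero, one_mul, Nat.cast_zero, add_zero, Nat.cast_one]
    nlinarith [norm_nonneg s]
  have hrest : s.re ^ m ≤ ∏ k ∈ range m, ‖s + (2 + k : ℕ)‖ :=
    calc s.re ^ m = ∏ _k ∈ range m, s.re := by rw [prod_const, card_range]
      _ ≤ _ := prod_le_prod (fun _ _ => by linarith) fun k _ =>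
        (le_add_of_nonneg_right (Nat.cast_nonneg _)).trans (re_add_nat_le_norm_add_nat s _)
  exact mul_le_mul hfirst hrest (by positivity) (prod_nonneg fun _ _ => norm_nonneg _)

theorem integral_norm_Gamma_div_Gamma_add_nat_le {a : ℝ} (ha : 1 ≤ a) {n : ℕ} (hn : 1 ≤ n) :
    ∫ t : ℝ, ‖Gamma (a + t * I) / Gamma (a + t * I + (n + 1 : ℕ))‖ ≤ π / a ^ (n - 1) := by
  have hbound : ∀ t : ℝ, ‖Gamma (a + t * I) / Gamma (a + t * I + (n + 1 : ℕ))‖ ≤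
      (a ^ (n - 1))⁻¹ * (1 + t ^ 2)⁻¹ := by
    intro t
    have hre : (a + t * I).re = a := by simp
    rw [norm_Gamma_div_Gamma_add_nat (by linarith), ← mul_inv]
    refine inv_anti₀ (by positivity) ?_
    simpa using pow_mul_one_add_sq_le_prod_norm_add_nat (hre.ge.trans' ha) hn
  calc _ ≤ ∫ t : ℝ, (a ^ (n - 1))⁻¹ * (1 + t ^ 2)⁻¹ :=
        integral_mono_of_nonneg (.of_forall fun _ => norm_nonneg _)
          (integrable_inv_one_add_sq.const_mul _) (.of_forall hbound)
    _ = π / a ^ (n - 1) := by rw [integral_const_mul, integral_univ_inv_one_add_sq, inv_mul_eq_div]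

end Complex

namespace Real

theorem exp_sub_one_le_exp_sub_self (x : ℝ) : exp (x - 1) ≤ exp x - x := by
  have hsplit : exp x = exp (x - 1) * exp 1 := by rw [← exp_add, sub_add_cancel]
  nlinarith [add_one_le_exp (x - 1), add_one_le_exp 1, exp_pos (x - 1)]

theorem self_le_exp_half (x : ℝ) : x ≤ exp (x / 2) := by
  have hsq : exp (x / 2) = exp (x / 4) ^ 2 := by rw [← exp_nat_mul]; ring_nf
  nlinarith [add_one_le_exp (x / 4), exp_pos (x / 4), sq_nonneg (x / 4 - 1)]

theorem pi_le_exp_two : π ≤ exp 2 := by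
  have hsq : exp 2 = exp 1 ^ 2 := by rw [← exp_nat_mul]; norm_num
  nlinarith [pi_le_four, add_one_le_exp 1]

end Real

theorem Nat.factorial_le_exp_sq_div_two (n : ℕ) : (n ! : ℝ) ≤ exp ((n : ℝ) ^ 2 / 2) :=
  calc (n ! : ℝ) ≤ (n : ℝ) ^ n := by exact_mod_cast n.factorial_le_pow
    _ ≤ exp ((n : ℝ) / 2) ^ n := pow_le_pow_left₀ (Nat.cast_nonneg n) (self_le_exp_half n) n
    _ = exp ((n : ℝ) ^ 2 / 2) := by rw [← exp_nat_mul]; ring_nf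

theorem factorial_mul_pi_div_pow_exp_sub_self_le {n : ℕ} (hn : 7 ≤ n) :
    n ! * (π / (exp n - n) ^ (n - 1)) ≤ exp (-n) := by
  obtain ⟨k, rfl⟩ : ∃ k, n = k + 1 := ⟨n - 1, by omega⟩
  have hk : (6 : ℝ) ≤ k := by exact_mod_cast (by omega : 6 ≤ k)
  rw [add_tsub_cancel_right]
  push_cast
  have hden : exp ((k : ℝ) * k) ≤ (exp (k + 1) - (k + 1)) ^ k := by
    rw [exp_nat_mul]
    exact pow_le_pow_left₀ (exp_pos _).le (by simpa using exp_sub_one_le_exp_sub_self (k + 1)) k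
  have hnum : ((k + 1) ! : ℝ) * π * exp (k + 1) ≤ exp ((k : ℝ) * k) :=
    calc ((k + 1) ! : ℝ) * π * exp (k + 1)
        ≤ exp (((k + 1 : ℕ) : ℝ) ^ 2 / 2) * exp 2 * exp (k + 1) := by
          gcongr
          · exact Nat.factorial_le_exp_sq_div_two _
          · exact pi_le_exp_two
      _ ≤ exp ((k : ℝ) * k) := by
          rw [← exp_add, ← exp_add, exp_le_exp]
          push_cast
          nlinarith
  have hpos : 0 < (exp (k + 1) - (k + 1)) ^ k :=
    pow_pos (by linarith [add_one_le_exp ((k : ℝ) + 1)]) k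
  rw [exp_neg, mul_div_assoc', div_le_iff₀ hpos, ← div_eq_inv_mul, le_div_iff₀ (exp_pos _)]
  exact hnum.trans hden

/-- The vertical-line contribution to the Nörlund–Rice integral is exponentially
small: for all sufficiently large `n`,
`n! ∫_ℝ |Γ(eⁿ - n + it)/Γ(eⁿ + 1 + it)| dt ≤ e^{-n}`. -/
theorem gamma_ratio_line_integral_small :
    ∃ N : ℕ, ∀ n : ℕ, N ≤ n →
      (Nat.factorial n : ℝ) *
        (∫ t : ℝ, ‖
          (Complex.Gamma ((Real.exp n - n : ℝ) + t * Complex.I) /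
            Complex.Gamma ((Real.exp n + 1 : ℝ) + t * Complex.I))‖) ≤
        Real.exp (-(n : ℝ)) := by
  refine ⟨7, fun n hn => ?_⟩
  have ha : 1 ≤ exp n - n := by linarith [add_one_le_exp (n : ℝ)]
  have hshift : ∀ t : ℝ, (((exp n + 1 : ℝ) : ℂ) + t * Complex.I) =
      ((exp n - n : ℝ) : ℂ) + t * Complex.I + (n + 1 : ℕ) := fun t => by push_cast; ring
  simp_rw [hshift]
  exact (mul_le_mul_of_nonneg_left (Complex.integral_norm_Gamma_div_Gamma_add_nat_le ha
    (by omega)) (Nat.cast_nonneg _)).trans (factorial_mul_pi_div_pow_exp_sub_self_le hn)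
end

section
/- Let a < 1/2 be a real number and let (ρ_i)_{i∈ι} be a family of complex numbers indexed by a countable set ι such that for every i one has ρ_i ≠ 1 − a and 0 ≤ Re ρ_i ≤ 1, and such that the family i ↦ (1 + |Re ρ_i|)/(1 + |ρ_i|)² is summable. Then for every positive integer n the family i ↦ Re[1 − ((ρ_i − a)/(ρ_i + a − 1))^{n}] is summable. -/
/-!
Write `w = (z - a) / (z - (1 - a)) = 1 + u` with `u = (1 - 2a) / (z - (1 - a))`. Then
`1 - w ^ n = -n u + O(|u|²)`, and as `|z| → ∞` both `Re u = (1 - 2a) Re (z - 1 + a) / |z - 1 + a|²`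
and `|u|²` are `O((1 + |Re z|) / (1 + |z|)²)`. Summability of these weights forces `|ρ_i| → ∞`
along the cofinite filter, so the terms are eventually dominated by a multiple of the weights.
-/

open Filter Asymptotics Bornology Topology

noncomputable def liWeight (z : ℂ) : ℝ := (1 + |z.re|) / (1 + ‖z‖) ^ 2

lemma inv_one_add_norm_sq_le_liWeight (z : ℂ) : ((1 + ‖z‖) ^ 2)⁻¹ ≤ liWeight z := by
  rw [liWeight, ← one_div]
  gcongr
  simp

lemma norm_one_add_pow_sub_one_sub_mul_le (u : ℂ) (n : ℕ) :
    ‖(1 + u) ^ n - 1 - n * u‖ ≤ n ^ 2 * (1 + ‖u‖) ^ n * ‖u‖ ^ 2 := by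
  induction n with
  | zero => simp
  | succ n ih =>
    have hrec : (1 + u) ^ (n + 1) - 1 - ↑(n + 1) * u =
        (1 + u) * ((1 + u) ^ n - 1 - n * u) + n * u ^ 2 := by
      push_cast
      ring
    have hpow : 1 ≤ (1 + ‖u‖) ^ (n + 1) := one_le_pow₀ (by simp)
    calc ‖(1 + u) ^ (n + 1) - 1 - ↑(n + 1) * u‖
        ≤ (1 + ‖u‖) * (n ^ 2 * (1 + ‖u‖) ^ n * ‖u‖ ^ 2) + n * ‖u‖ ^ 2 := by
          rw [hrec]
          refine (norm_add_le _ _).trans (add_le_add ?_ ?_)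
          · rw [norm_mul]
            exact mul_le_mul ((norm_add_le _ _).trans (by simp)) ih (norm_nonneg _)
              (by positivity)
          · simp
      _ ≤ (n + 1 : ℕ) ^ 2 * (1 + ‖u‖) ^ (n + 1) * ‖u‖ ^ 2 := by
          rw [pow_succ (1 + ‖u‖) n] at hpow ⊢
          push_cast
          nlinarith [mul_le_mul_of_nonneg_left hpow (by positivity : 0 ≤ (2 * n + 1) * ‖u‖ ^ 2)]

lemma isBigO_re_one_sub_one_add_pow {α : Type*} {l : Filter α} {u : α → ℂ} {T : α → ℝ}
    (hu : Tendsto u l (𝓝 0)) (hre : (fun x => (u x).re) =O[l] T)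
    (hsq : (fun x => ‖u x‖ ^ 2) =O[l] T) (n : ℕ) :
    (fun x => (1 - (1 + u x) ^ n).re) =O[l] T := by
  have hbdd : (fun x => (n : ℝ) ^ 2 * (1 + ‖u x‖) ^ n) =O[l] fun _ => (1 : ℝ) :=
    (((hu.norm.const_add 1).pow n).const_mul _).isBigO_one ℝ
  have hrem : (fun x => ((1 + u x) ^ n - 1 - n * u x).re) =O[l] T := calc
    _ =O[l] fun x => (1 + u x) ^ n - 1 - n * u x :=
      isBigO_of_le _ fun x => (Real.norm_eq_abs _).trans_le (Complex.abs_re_le_norm _)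
    _ =O[l] fun x => (n : ℝ) ^ 2 * (1 + ‖u x‖) ^ n * ‖u x‖ ^ 2 :=
      isBigO_of_le _ fun x => (norm_one_add_pow_sub_one_sub_mul_le _ _).trans (le_abs_self _)
    _ =O[l] T := by simpa only [one_mul] using hbdd.mul hsq
  have hsplit (x : α) :
      (1 - (1 + u x) ^ n).re = -(n * (u x).re) - ((1 + u x) ^ n - 1 - n * u x).re := by
    simp only [Complex.sub_re, Complex.one_re, Complex.mul_re, Complex.natCast_re,
      Complex.natCast_im, zero_mul, sub_zero]
    ring
  simpa only [hsplit] using (hre.const_mul_left _).neg_left.sub hrem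

lemma eventually_one_add_norm_le_two_mul_norm_sub {E : Type*} [SeminormedAddCommGroup E]
    (c : E) : ∀ᶠ z in cobounded E, 1 + ‖z‖ ≤ 2 * ‖z - c‖ := by
  filter_upwards [tendsto_norm_cobounded_atTop.eventually_ge_atTop (1 + 2 * ‖c‖)] with z hz
  linarith [norm_sub_norm_le z c]

lemma tendsto_inv_one_add_norm_cobounded {E : Type*} [SeminormedAddCommGroup E] :
    Tendsto (fun z : E => (1 + ‖z‖)⁻¹) (cobounded E) (𝓝 0) :=
  (tendsto_atTop_add_const_left _ 1 tendsto_norm_cobounded_atTop).inv_tendsto_atTop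

lemma isBigO_inv_sub_cobounded {𝕜 : Type*} [NormedField 𝕜] (c : 𝕜) :
    (fun z => (z - c)⁻¹) =O[cobounded 𝕜] fun z => (1 + ‖z‖)⁻¹ := by
  refine IsBigO.of_bound 2 ?_
  filter_upwards [eventually_one_add_norm_le_two_mul_norm_sub c] with z hz
  have hz_pos : 0 < 1 + ‖z‖ := by positivity
  have hzc_pos : 0 < ‖z - c‖ := by linarith
  rw [norm_inv, norm_inv, Real.norm_of_nonneg hz_pos.le, inv_le_iff_one_le_mul₀ hzc_pos]
  field_simp
  linarith

lemma isBigO_re_inv_sub_cobounded (c : ℂ) :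
    (fun z => ((z - c)⁻¹).re) =O[cobounded ℂ] liWeight := by
  refine IsBigO.of_bound (4 * (1 + ‖c‖)) ?_
  filter_upwards [eventually_one_add_norm_le_two_mul_norm_sub c] with z hz
  have hre : |(z - c).re| ≤ (1 + ‖c‖) * (1 + |z.re|) := by
    rw [Complex.sub_re]
    nlinarith [abs_sub z.re c.re, Complex.abs_re_le_norm c, abs_nonneg z.re, norm_nonneg c]
  have hsq : (1 + ‖z‖) ^ 2 / 4 ≤ ‖z - c‖ ^ 2 := by nlinarith [norm_nonneg z]
  rw [Complex.inv_re, Complex.normSq_eq_norm_sq, Real.norm_eq_abs, abs_div,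
    abs_of_nonneg (sq_nonneg ‖z - c‖), liWeight, Real.norm_of_nonneg (by positivity)]
  calc |(z - c).re| / ‖z - c‖ ^ 2 ≤ (1 + ‖c‖) * (1 + |z.re|) / ((1 + ‖z‖) ^ 2 / 4) :=
        div_le_div₀ (by positivity) hre (by positivity) hsq
    _ = 4 * (1 + ‖c‖) * ((1 + |z.re|) / (1 + ‖z‖) ^ 2) := by field_simp

lemma isBigO_re_one_sub_div_sub_pow (a c : ℝ) (n : ℕ) :
    (fun z : ℂ => (1 - ((z - a) / (z - c)) ^ n).re) =O[cobounded ℂ] liWeight := by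
  have hinv := isBigO_inv_sub_cobounded (c : ℂ)
  have hu := (hinv.trans_tendsto tendsto_inv_one_add_norm_cobounded).const_mul ((c - a : ℝ) : ℂ)
  rw [mul_zero] at hu
  have hre : (fun z => (((c - a : ℝ) : ℂ) * (z - c)⁻¹).re) =O[cobounded ℂ] liWeight := by
    simpa only [Complex.re_ofReal_mul] using
      (isBigO_re_inv_sub_cobounded c).const_mul_left (c - a)
  have hsq : (fun z => ‖((c - a : ℝ) : ℂ) * (z - c)⁻¹‖ ^ 2) =O[cobounded ℂ] liWeight := by
    refine ((hinv.const_mul_left _).norm_left.pow 2).trans (isBigO_of_le _ fun z => ?_)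
    rw [Real.norm_of_nonneg (by positivity), Real.norm_of_nonneg (by rw [liWeight]; positivity),
      inv_pow]
    exact inv_one_add_norm_sq_le_liWeight z
  refine (isBigO_re_one_sub_one_add_pow hu hre hsq n).congr' ?_ EventuallyEq.rfl
  filter_upwards [eventually_ne_cobounded (c : ℂ)] with z hz
  have hmob : 1 + ((c - a : ℝ) : ℂ) * (z - c)⁻¹ = (z - a) / (z - c) := by
    field_simp [sub_ne_zero.mpr hz]
    push_cast
    ring
  rw [hmob]

lemma tendsto_cobounded_of_tendsto_inv_one_add_norm_sq {α E : Type*}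
    [SeminormedAddCommGroup E] {l : Filter α} {ρ : α → E}
    (h : Tendsto (fun i => ((1 + ‖ρ i‖) ^ 2)⁻¹) l (𝓝 0)) : Tendsto ρ l (cobounded E) := by
  refine tendsto_norm_atTop_iff_cobounded.mp (tendsto_atTop.mpr fun R => ?_)
  filter_upwards [h.eventually (gt_mem_nhds (by positivity : (0 : ℝ) < ((1 + |R|) ^ 2)⁻¹))]
    with i hi
  have hsq := (inv_lt_inv₀ (by positivity) (by positivity)).mp hi
  linarith [lt_of_pow_lt_pow_left₀ 2 (by positivity) hsq, le_abs_self R]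

theorem modified_li_coeff_summable_general (a : ℝ)
    {ι : Type*} (ρ : ι → ℂ)
    (hsum : Summable fun i => (1 + |(ρ i).re|) / (1 + ‖ρ i‖) ^ 2) :
    ∀ n : ℕ, 0 < n →
      Summable fun i => (1 - ((ρ i - a) / (ρ i + a - 1)) ^ n).re := by
  intro n _
  have hρ : Tendsto ρ cofinite (cobounded ℂ) :=
    tendsto_cobounded_of_tendsto_inv_one_add_norm_sq <|
      squeeze_zero (fun _ => by positivity) (fun i => inv_one_add_norm_sq_le_liWeight (ρ i))
        hsum.tendsto_cofinite_zero
  have hbig := (isBigO_re_one_sub_div_sub_pow a (1 - a) n).comp_tendsto hρ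
  push_cast [sub_sub_eq_add_sub] at hbig
  exact summable_of_isBigO hsum hbig

/-- Absolute convergence of the real parts of the modified Li coefficients for a
multiset of points in the critical strip (Lagarias-type lemma). -/
theorem modified_li_coeff_summable (a : ℝ) (ha : a < 1 / 2)
    {ι : Type*} [Countable ι] (ρ : ι → ℂ)
    (hne : ∀ i, ρ i ≠ 1 - a)
    (hre : ∀ i, 0 ≤ (ρ i).re ∧ (ρ i).re ≤ 1)
    (hsum : Summable fun i => (1 + |(ρ i).re|) / (1 + ‖ρ i‖) ^ 2) :
    ∀ n : ℕ, 0 < n →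
      Summable fun i => (1 - ((ρ i - a) / (ρ i + a - 1)) ^ n).re :=
  modified_li_coeff_summable_general a ρ hsum
end

section
/- Let θ be a real number, K > 0 and C ≥ 0 real constants, and t > δ > 0 real numbers. Then there exist infinitely many positive integers n such that K·(1 − (1 + t)^{n} cos(nθ)) + C·n²·(1 + t − δ)^{n} < 0. -/
open Real Filter

lemma cos_ge_half_infinitely (θ : ℝ) (N : ℕ) :
    ∃ n : ℕ, N < n ∧ (1:ℝ)/2 ≤ Real.cos (n * θ) := by
  have hq : 0 < 6 * (N + 1) := by positivity
  obtain ⟨j, k, hk0, hkle, hjk⟩ :=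
    Real.exists_int_int_abs_mul_sub_le (θ / (2 * π)) hq
  set m : ℕ := N + 1
  refine ⟨m * k.toNat, ?_, ?_⟩
  · have hk1 : 1 ≤ k.toNat := by omega
    calc N < m := Nat.lt_succ_self N
    _ ≤ m * k.toNat := Nat.le_mul_of_pos_right m (by omega)
  · have hπ : 0 < π := Real.pi_pos
    have hk : ((k.toNat : ℕ) : ℝ) = (k : ℝ) := by
      exact_mod_cast Int.toNat_of_nonneg hk0.le
    have hθ : ((m * k.toNat : ℕ) : ℝ) * θ
        = (m : ℝ) * ((k : ℝ) * (θ / (2 * π)) - (j : ℝ)) * (2 * π)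
          + (m * j : ℤ) * (2 * π) := by
      push_cast
      rw [hk]
      field_simp
      ring
    rw [hθ, Real.cos_add_int_mul_two_pi]
    set x := (m : ℝ) * ((k : ℝ) * (θ / (2 * π)) - (j : ℝ)) * (2 * π) with hx
    have hxabs : |x| ≤ π / 3 := by
      have h1 : |x| = (m : ℝ) * |(k : ℝ) * (θ / (2 * π)) - (j : ℝ)| * (2 * π) := by
        rw [hx, abs_mul, abs_mul]
        rw [abs_of_nonneg (by positivity : (0:ℝ) ≤ (m:ℝ)),
          abs_of_nonneg (by positivity : (0:ℝ) ≤ 2 * π)]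
      rw [h1]
      have hm1 : (1:ℝ) ≤ (m : ℝ) := by exact_mod_cast Nat.one_le_iff_ne_zero.mpr (by omega)
      have hden : (0:ℝ) < ((6 * m : ℕ) : ℝ) + 1 := by positivity
      have h3 : (m : ℝ) * (1 / (((6 * m : ℕ) : ℝ) + 1)) * (2 * π) ≤ π / 3 := by
        rw [mul_comm, ← mul_assoc, mul_one_div, div_le_div_iff₀ hden (by norm_num : (0:ℝ) < 3)]
        have : ((6 * m : ℕ) : ℝ) = 6 * (m : ℝ) := by push_cast; ring
        rw [this]
        nlinarith [hπ]
      calc (m : ℝ) * |(k : ℝ) * (θ / (2 * π)) - (j : ℝ)| * (2 * π)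
          ≤ (m : ℝ) * (1 / (((6 * m : ℕ) : ℝ) + 1)) * (2 * π) := by
            apply mul_le_mul_of_nonneg_right _ (by positivity)
            exact mul_le_mul_of_nonneg_left hjk (by positivity)
        _ ≤ π / 3 := h3
    have : Real.cos (π / 3) ≤ Real.cos |x| := by
      apply Real.cos_le_cos_of_nonneg_of_le_pi (abs_nonneg x)
      · linarith
      · exact hxabs
    rw [Real.cos_abs] at this
    rw [Real.cos_pi_div_three] at this
    exact this

/-- Dirichlet-approximation argument: `K(1 - (1+t)ⁿ cos(nθ)) + C n² (1+t-δ)ⁿ` is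
negative for infinitely many positive integers `n`. -/
theorem dirichlet_negativity (θ K C t δ : ℝ) (hK : 0 < K) (hC : 0 ≤ C)
    (hδ : 0 < δ) (htδ : δ < t) :
    ∀ N : ℕ, ∃ n : ℕ, N < n ∧
      K * (1 - (1 + t) ^ n * Real.cos (n * θ)) +
        C * (n : ℝ) ^ 2 * (1 + t - δ) ^ n < 0 := by
  intro N
  set r : ℝ := (1 + t - δ) / (1 + t) with hr
  have ht1 : (1:ℝ) < 1 + t := by linarith
  have hrpos : 0 < r := by
    apply div_pos <;> linarith
  have hrlt : r < 1 := by
    rw [hr, div_lt_one (by linarith)]; linarith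
  have hlim : Tendsto (fun n : ℕ => C * ((n : ℝ) ^ 2 * r ^ n)) atTop (nhds 0) := by
    have := (summable_pow_mul_geometric_of_norm_lt_one 2
      (by rw [Real.norm_eq_abs, abs_of_pos hrpos]; exact hrlt) : Summable fun n : ℕ => (n : ℝ) ^ 2 * r ^ n)
    simpa using (this.tendsto_atTop_zero.const_mul C)
  have h1 : ∀ᶠ n : ℕ in atTop, C * ((n : ℝ) ^ 2 * r ^ n) < K / 4 := by
    have := hlim.eventually (eventually_lt_nhds (by positivity : (0:ℝ) < K / 4))
    simpa using this
  have h2 : ∀ᶠ n : ℕ in atTop, (4:ℝ) < (1 + t) ^ n := by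
    exact (tendsto_pow_atTop_atTop_of_one_lt ht1).eventually_gt_atTop 4
  obtain ⟨N₀, hN₀⟩ := (h1.and h2).exists_forall_of_atTop
  obtain ⟨n, hn, hcos⟩ := cos_ge_half_infinitely θ (max N N₀)
  refine ⟨n, lt_of_le_of_lt (le_max_left _ _) hn, ?_⟩
  obtain ⟨hA, hB⟩ := hN₀ n (le_of_lt (lt_of_le_of_lt (le_max_right _ _) hn))
  have hpow : (0:ℝ) < (1 + t) ^ n := by positivity
  have hsn : (1 + t - δ) ^ n = r ^ n * (1 + t) ^ n := by
    rw [hr, div_pow, div_mul_cancel₀]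
    positivity
  have key : K * (1 + t) ^ n * Real.cos (n * θ) ≥ K / 2 * (1 + t) ^ n := by
    have : K / 2 * (1 + t) ^ n = K * (1 + t) ^ n * (1/2) := by ring
    rw [ge_iff_le, this]
    exact mul_le_mul_of_nonneg_left hcos (by positivity)
  have hCterm : C * (n : ℝ) ^ 2 * (1 + t - δ) ^ n < K / 4 * (1 + t) ^ n := by
    rw [hsn]
    calc C * (n : ℝ) ^ 2 * (r ^ n * (1 + t) ^ n)
        = (C * ((n : ℝ) ^ 2 * r ^ n)) * (1 + t) ^ n := by ring
      _ < K / 4 * (1 + t) ^ n := by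
          exact mul_lt_mul_of_pos_right hA hpow
  nlinarith [key, hCterm, hB, hpow]
end
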